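/- arXiv:2504.05933 — 12 statements merged into one kernel-verified Lean document; each statement's English description precedes it below -/
import Mathlib

section
/- If a sequence of positive integers (a_n) satisfies lim_{n→∞} a_n^{1/2^n} = ∞, then the sum of its reciprocals ∑ 1/a_n is irrational (assuming the sum converges). -/
/-!
Erdős' argument. Listing the terms in increasing order changes neither the sum nor the growth
hypothesis, so we may assume `a` monotone. If `∑ 1 / a k = p / q`, then for every `n` the number
`q · a 0 ⋯ a (n - 1) · ∑_{k ≥ n} 1 / a k` is a positive integer. Fix `J` large, let `n` be the
first index with `2 ^ 2 ^ (n + J) < a n`, and `m ≥ J` the level with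
`2 ^ 2 ^ (n + m) < a n ≤ 2 ^ 2 ^ (n + m + 1)`. With `W = 2 ^ 2 ^ m`, every earlier term satisfies
`a k ≤ W ^ 2 ^ k`, so their product is at most `W ^ (2 ^ n - 1)`. In the tail, the `m + 1` terms
`a n, …, a (n + m)` contribute at most `(m + 1) / a n` and the later ones, being at least
`2 ^ 2 ^ k`, at most `2 / a n`. Since `q (m + 3) ≤ W`, the positive integer is at most
`W ^ 2 ^ n / a n = 2 ^ 2 ^ (n + m) / a n < 1`.
-/

open Filter Finset

section LexRank

variable {a : ℕ → ℕ}

lemma finite_setOf_le_of_tendsto (ha : Tendsto a atTop atTop) (v : ℕ) : {i | a i ≤ v}.Finite := by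
  have h : ∀ᶠ i in cofinite, v < a i := Nat.cofinite_eq_atTop ▸ ha.eventually_gt_atTop v
  simpa using Filter.eventually_cofinite.1 h

def lexKey (a : ℕ → ℕ) (i : ℕ) : ℕ ×ₗ ℕ := toLex (a i, i)

lemma lexKey_injective : Function.Injective (lexKey a) := fun _ _ h => congrArg (·.2) h

lemma finite_lexKey_preimage_Iic (ha : Tendsto a atTop atTop) (i : ℕ) :
    (lexKey a ⁻¹' Set.Iic (lexKey a i)).Finite :=
  (finite_setOf_le_of_tendsto ha (a i)).subset fun j hj => by
    rcases Prod.Lex.toLex_le_toLex.1 hj with h | ⟨h, -⟩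
    exacts [h.le, h.le]

lemma finite_lexKey_preimage_Iio (ha : Tendsto a atTop atTop) (i : ℕ) :
    (lexKey a ⁻¹' Set.Iio (lexKey a i)).Finite :=
  (finite_lexKey_preimage_Iic ha i).subset <| Set.preimage_mono Set.Iio_subset_Iic_self

noncomputable def lexRank (a : ℕ → ℕ) (i : ℕ) : ℕ :=
  (lexKey a ⁻¹' Set.Iio (lexKey a i)).ncard

lemma lexRank_lt_lexRank (ha : Tendsto a atTop atTop) {i j : ℕ}
    (h : lexKey a i < lexKey a j) : lexRank a i < lexRank a j := by
  refine Set.ncard_lt_ncard ?_ (finite_lexKey_preimage_Iio ha j)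
  exact (Set.ssubset_iff_of_subset (Set.preimage_mono (Set.Iio_subset_Iio h.le))).2
    ⟨i, h, lt_irrefl (lexKey a i)⟩

lemma lexRank_injective (ha : Tendsto a atTop atTop) : Function.Injective (lexRank a) := by
  intro i j hij
  by_contra hne
  rcases ((lexKey_injective (a := a)).ne hne).lt_or_gt with h | h
  · exact (lexRank_lt_lexRank ha h).ne hij
  · exact (lexRank_lt_lexRank ha h).ne' hij

lemma lexRank_surjective (ha : Tendsto a atTop atTop) : Function.Surjective (lexRank a) := by
  intro m
  obtain ⟨_, ⟨i, rfl⟩, hmi⟩ :=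
    (Set.infinite_range_of_injective (lexRank_injective ha)).exists_gt m
  have hIic : lexKey a ⁻¹' Set.Iic (lexKey a i) =
      insert i (lexKey a ⁻¹' Set.Iio (lexKey a i)) := by
    ext j
    simp [le_iff_eq_or_lt, lexKey_injective.eq_iff]
  have hcard : (finite_lexKey_preimage_Iic ha i).toFinset.card = lexRank a i + 1 := by
    rw [← Set.ncard_eq_toFinset_card _ (finite_lexKey_preimage_Iic ha i), hIic,
      Set.ncard_insert_of_notMem (s := lexKey a ⁻¹' Set.Iio (lexKey a i))
        (lt_irrefl (lexKey a i)) (finite_lexKey_preimage_Iio ha i), lexRank]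
  -- the `lexRank a i + 1` indices up to `i` go injectively into `range (lexRank a i + 1)`,
  -- hence onto it
  obtain ⟨j, -, hj⟩ := surj_on_of_inj_on_of_card_le
    (s := (finite_lexKey_preimage_Iic ha i).toFinset) (t := range (lexRank a i + 1))
    (fun j _ => lexRank a j)
    (fun j hj => by
      rw [Set.Finite.mem_toFinset, Set.mem_preimage, Set.mem_Iic] at hj
      rw [mem_range, Nat.lt_succ_iff]
      rcases hj.eq_or_lt with h | h
      · rw [show j = i from lexKey_injective h]
      · exact (lexRank_lt_lexRank ha h).le)
    (fun _ _ _ _ h => lexRank_injective ha h) (by rw [hcard, card_range]) m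
    (mem_range.2 (by omega))
  exact ⟨j, hj.symm⟩

lemma exists_equiv_monotone_comp (ha : Tendsto a atTop atTop) :
    ∃ σ : ℕ ≃ ℕ, Monotone (a ∘ σ) := by
  have hbij : Function.Bijective (lexRank a) := ⟨lexRank_injective ha, lexRank_surjective ha⟩
  refine ⟨(Equiv.ofBijective _ hbij).symm, fun m n hmn => ?_⟩
  by_contra! h
  have := lexRank_lt_lexRank ha (Prod.Lex.toLex_lt_toLex.2 (Or.inl h) :
    lexKey a ((Equiv.ofBijective _ hbij).symm n) < lexKey a ((Equiv.ofBijective _ hbij).symm m))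
  rw [← Equiv.ofBijective_apply _ hbij, ← Equiv.ofBijective_apply _ hbij,
    Equiv.apply_symm_apply, Equiv.apply_symm_apply] at this
  omega

end LexRank

lemma exists_le_le_apply_of_injective {σ : ℕ → ℕ} (hσ : Function.Injective σ) (n : ℕ) :
    ∃ k ≤ n, n ≤ σ k := by
  by_contra! h
  obtain ⟨x, -, y, -, hxy, he⟩ := exists_ne_map_eq_of_card_lt_of_maps_to
    (s := range (n + 1)) (t := range n) (by simp)
    (fun k hk => mem_range.2 (h k (Nat.lt_succ_iff.1 (mem_range.1 hk))))
  exact hxy (hσ he)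

lemma eventually_lt_apply_of_monotone_comp {a : ℕ → ℕ} {σ : ℕ ≃ ℕ} (hσ : Monotone (a ∘ σ))
    {f : ℕ → ℕ} (hf : Monotone f) (h : ∀ᶠ i in atTop, f i < a i) :
    ∀ᶠ n in atTop, f n < a (σ n) := by
  obtain ⟨N, hN⟩ := h.exists_forall_of_atTop
  filter_upwards [eventually_ge_atTop N] with n hn
  obtain ⟨k, hkn, hnk⟩ := exists_le_le_apply_of_injective σ.injective n
  calc f n ≤ f (σ k) := hf hnk
    _ < a (σ k) := hN _ (hn.trans hnk)
    _ ≤ a (σ n) := hσ hkn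

lemma two_pow_two_pow_monotone : Monotone fun i : ℕ => 2 ^ 2 ^ i :=
  fun _ _ h => Nat.pow_le_pow_right two_pos (Nat.pow_le_pow_right two_pos h)

lemma two_pow_two_pow_add (k m : ℕ) : 2 ^ 2 ^ (k + m) = (2 ^ 2 ^ m) ^ 2 ^ k := by
  rw [← pow_mul, ← pow_add, add_comm]

lemma self_le_two_pow_two_pow_add (n x : ℕ) : x ≤ 2 ^ 2 ^ (n + x) :=
  (Nat.lt_two_pow_self.trans Nat.lt_two_pow_self).le.trans
    (two_pow_two_pow_monotone (Nat.le_add_left x n))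

lemma two_pow_mul_two_pow_two_pow_le (k N : ℕ) : 2 ^ k * 2 ^ 2 ^ N ≤ 2 ^ 2 ^ (k + N) := by
  rw [← pow_add]
  refine Nat.pow_le_pow_right two_pos ?_
  have h1 : k + 1 ≤ 2 ^ k := Nat.lt_two_pow_self
  have h2 : 1 ≤ 2 ^ N := Nat.one_le_two_pow
  rw [pow_add]
  nlinarith

lemma two_mul_le_two_pow (m : ℕ) : 2 * m ≤ 2 ^ m := by
  rcases m with _ | m
  · simp
  · rw [pow_succ']
    exact Nat.mul_le_mul_left 2 Nat.lt_two_pow_self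

lemma mul_add_three_le_two_pow_two_pow {q m : ℕ} (hq : q ≤ m) (hm : 3 ≤ m) :
    q * (m + 3) ≤ 2 ^ 2 ^ m :=
  calc q * (m + 3) ≤ 2 ^ m * 2 ^ m := by
        have := two_mul_le_two_pow m
        nlinarith
    _ = 2 ^ (2 * m) := by rw [← pow_add, two_mul]
    _ ≤ 2 ^ 2 ^ m := Nat.pow_le_pow_right two_pos (two_mul_le_two_pow m)

lemma exists_two_pow_two_pow_lt_le {x n J : ℕ} (h : 2 ^ 2 ^ (n + J) < x) :
    ∃ m, J ≤ m ∧ 2 ^ 2 ^ (n + m) < x ∧ x ≤ 2 ^ 2 ^ (n + (m + 1)) := by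
  have hex : ∃ m, x ≤ 2 ^ 2 ^ (n + m) := ⟨x, self_le_two_pow_two_pow_add n x⟩
  have hJ : J < Nat.find hex := by
    by_contra! hle
    exact (Nat.find_spec hex).not_gt (h.trans_le' (two_pow_two_pow_monotone (by omega)))
  obtain ⟨m, hm⟩ : ∃ m, Nat.find hex = m + 1 := Nat.exists_eq_add_one_of_ne_zero (by omega)
  exact ⟨m, by omega, not_le.1 (Nat.find_min hex (by omega)), hm ▸ Nat.find_spec hex⟩

lemma prod_range_mul_le_pow_two_pow {b : ℕ → ℕ} {W n : ℕ} (h : ∀ k < n, b k ≤ W ^ 2 ^ k) :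
    (∏ k ∈ range n, b k) * W ≤ W ^ 2 ^ n := by
  induction n with
  | zero => simp
  | succ n ih =>
    rw [prod_range_succ, mul_right_comm, pow_succ, pow_mul, sq]
    exact Nat.mul_le_mul (ih fun k hk => h k (by omega)) (h n (by omega))

lemma exists_nat_eq_prod_mul_sum_one_div {ι : Type*} (s : Finset ι) {b : ι → ℕ}
    (hb : ∀ i ∈ s, b i ≠ 0) : ∃ z : ℕ, (∏ i ∈ s, (b i : ℝ)) * ∑ i ∈ s, 1 / (b i : ℝ) = z := by
  classical
  refine ⟨∑ i ∈ s, ∏ j ∈ s.erase i, b j, ?_⟩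
  push_cast
  rw [mul_sum]
  refine sum_congr rfl fun i hi => ?_
  have : (b i : ℝ) ≠ 0 := by exact_mod_cast hb i hi
  rw [← mul_prod_erase s (fun j => (b j : ℝ)) hi]
  field_simp

lemma one_le_den_mul_mul_sub {r : ℚ} {s : ℝ} {D z : ℕ} (hD : 0 < D) (hz : D * s = z)
    (hs : s < r) : 1 ≤ r.den * D * ((r : ℝ) - s) := by
  have hint : r.den * D * ((r : ℝ) - s) = ((D * r.num - r.den * z : ℤ) : ℝ) := by
    push_cast
    rw [← hz, Rat.cast_def]
    field_simp
  have hpos : (0 : ℝ) < r.den * D * ((r : ℝ) - s) := by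
    have := sub_pos.2 hs
    positivity
  rw [hint] at hpos ⊢
  exact_mod_cast (Int.cast_pos.1 hpos : (0 : ℤ) < _)

section Monotone

variable {b : ℕ → ℕ}

lemma tsum_one_div_nat_add_le (hb : Monotone b) (hsum : Summable fun k => 1 / (b k : ℝ))
    {n m : ℕ} (hgrow : ∀ k ≥ n, 2 ^ 2 ^ k ≤ b k) (hbn : b n ≤ 2 ^ 2 ^ (n + m)) :
    ∑' k, 1 / (b (k + n) : ℝ) ≤ ((m + 2 : ℕ) : ℝ) / b n := by
  have hbn_pos : (0 : ℝ) < b n := by exact_mod_cast Nat.one_le_two_pow.trans (hgrow n le_rfl)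
  rw [← ((summable_nat_add_iff n).2 hsum).sum_add_tsum_nat_add m, Nat.cast_add, add_div]
  gcongr
  · calc ∑ k ∈ range m, 1 / (b (k + n) : ℝ) ≤ #(range m) • (1 / (b n : ℝ)) :=
          sum_le_card_nsmul _ _ _ fun k _ =>
            one_div_le_one_div_of_le hbn_pos (by exact_mod_cast hb (Nat.le_add_left n k))
      _ = m / b n := by rw [card_range, nsmul_eq_mul, mul_one_div]
  · calc ∑' k, 1 / (b (k + m + n) : ℝ) ≤ ∑' k, (1 / 2 : ℝ) ^ k / 2 ^ 2 ^ (n + m) := by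
          refine ((summable_nat_add_iff m).2 ((summable_nat_add_iff n).2 hsum)).tsum_le_tsum
            (fun k => ?_) (summable_geometric_two.div_const _)
          have hk : 2 ^ k * 2 ^ 2 ^ (n + m) ≤ b (k + m + n) :=
            (two_pow_mul_two_pow_two_pow_le k (n + m)).trans
              (by rw [show k + (n + m) = k + m + n by omega]; exact hgrow _ (by omega))
          rw [div_pow, one_pow, div_div]
          exact one_div_le_one_div_of_le (by positivity) (by exact_mod_cast hk)
      _ = 2 / 2 ^ 2 ^ (n + m) := by rw [tsum_div_const, tsum_geometric_two]
      _ ≤ 2 / b n := by gcongr; exact_mod_cast hbn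

lemma le_den_mul_mul_prod_of_eq_tsum (hpos : ∀ n, 0 < b n)
    (hsum : Summable fun n => 1 / (b n : ℝ)) {r : ℚ} (hr : (r : ℝ) = ∑' n, 1 / (b n : ℝ))
    {n c : ℕ} (htail : ∑' k, 1 / (b (k + n) : ℝ) ≤ c / b n) :
    b n ≤ r.den * c * ∏ k ∈ range n, b k := by
  have hsplit : (r : ℝ) - ∑ k ∈ range n, 1 / (b k : ℝ) = ∑' k, 1 / (b (k + n) : ℝ) := by
    rw [hr, ← hsum.sum_add_tsum_nat_add n, add_sub_cancel_left]
  have htail_pos : 0 < ∑' k, 1 / (b (k + n) : ℝ) :=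
    ((summable_nat_add_iff n).2 hsum).tsum_pos (fun k => by positivity) 0
      (one_div_pos.2 (by exact_mod_cast hpos _))
  obtain ⟨z, hz⟩ := exists_nat_eq_prod_mul_sum_one_div (range n) (b := b) fun k _ => (hpos k).ne'
  have hone := one_le_den_mul_mul_sub (D := ∏ k ∈ range n, b k) (r := r)
    (prod_pos fun k _ => hpos k) (by push_cast; exact hz) (sub_pos.1 (hsplit ▸ htail_pos))
  rw [hsplit] at hone
  push_cast at hone
  have hbn : (0 : ℝ) < b n := by exact_mod_cast hpos n
  have key : (b n : ℝ) ≤ r.den * c * ∏ k ∈ range n, (b k : ℝ) :=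
    calc (b n : ℝ) = 1 * b n := (one_mul _).symm
      _ ≤ r.den * (∏ k ∈ range n, (b k : ℝ)) * (∑' k, 1 / (b (k + n) : ℝ)) * b n := by gcongr
      _ ≤ r.den * (∏ k ∈ range n, (b k : ℝ)) * (c / b n) * b n := by gcongr
      _ = r.den * c * ∏ k ∈ range n, (b k : ℝ) := by field_simp
  exact_mod_cast key

theorem irrational_tsum_one_div_of_monotone (hmono : Monotone b) (hpos : ∀ n, 0 < b n)
    (hgrowth : ∀ J, ∀ᶠ n in atTop, 2 ^ 2 ^ (n + J) < b n)
    (hsum : Summable fun n => 1 / (b n : ℝ)) : Irrational (∑' n, 1 / (b n : ℝ)) := by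
  rintro ⟨r, hr⟩
  obtain ⟨M, hM⟩ := (hgrowth 0).exists_forall_of_atTop
  -- large enough for `mul_add_three_le_two_pow_two_pow`, and `b M ≤ J` forces `M ≤ n`
  set J := r.den + b M + 3
  have hex : ∃ n, 2 ^ 2 ^ (n + J) < b n := (hgrowth J).exists
  set n := Nat.find hex
  have hn : 2 ^ 2 ^ (n + J) < b n := Nat.find_spec hex
  have hMn : M ≤ n := by
    by_contra! h
    exact hn.not_ge (((hmono h.le).trans (by omega)).trans (self_le_two_pow_two_pow_add n J))
  obtain ⟨m, hJm, hlow, hup⟩ := exists_two_pow_two_pow_lt_le hn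
  have hbn : b n ≤ r.den * (m + 3) * ∏ k ∈ range n, b k :=
    le_den_mul_mul_prod_of_eq_tsum hpos hsum hr
      (tsum_one_div_nat_add_le hmono hsum (fun k hk => (hM k (hMn.trans hk)).le) hup)
  have hprod : (∏ k ∈ range n, b k) * 2 ^ 2 ^ m ≤ 2 ^ 2 ^ (n + m) := by
    rw [two_pow_two_pow_add]
    refine prod_range_mul_le_pow_two_pow fun k hk => ?_
    rw [← two_pow_two_pow_add]
    exact (not_lt.1 (Nat.find_min hex hk)).trans (two_pow_two_pow_monotone (by omega))
  have hq : r.den * (m + 3) ≤ 2 ^ 2 ^ m := mul_add_three_le_two_pow_two_pow (by omega) (by omega)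
  have : b n ≤ 2 ^ 2 ^ (n + m) :=
    calc b n ≤ r.den * (m + 3) * ∏ k ∈ range n, b k := hbn
      _ ≤ 2 ^ 2 ^ m * ∏ k ∈ range n, b k := Nat.mul_le_mul_right _ hq
      _ ≤ 2 ^ 2 ^ (n + m) := by rw [mul_comm]; exact hprod
  exact hlow.not_ge this

end Monotone

lemma eventually_two_pow_two_pow_add_lt {a : ℕ → ℕ}
    (h : Tendsto (fun n => (a n : ℝ) ^ ((1 : ℝ) / 2 ^ n)) atTop atTop) (J : ℕ) :
    ∀ᶠ n in atTop, 2 ^ 2 ^ (n + J) < a n := by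
  filter_upwards [h.eventually_gt_atTop (2 ^ 2 ^ J : ℝ)] with n hn
  rw [one_div, Real.lt_rpow_inv_iff_of_pos (by positivity) (Nat.cast_nonneg _) (by positivity),
    show (2 : ℝ) ^ n = ((2 ^ n : ℕ) : ℝ) by push_cast; rfl, Real.rpow_natCast, ← pow_mul,
    ← pow_add, add_comm] at hn
  exact_mod_cast hn

theorem reciprocal_sum_irrational_of_doubly_exp_growth
    (a : ℕ → ℕ) (hpos : ∀ n, 0 < a n)
    (hgrowth : Tendsto (fun n => (a n : ℝ) ^ ((1 : ℝ) / 2 ^ n)) atTop atTop)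
    (hsum : Summable (fun n => 1 / (a n : ℝ))) :
    Irrational (∑' n, 1 / (a n : ℝ)) := by
  have hgrow := eventually_two_pow_two_pow_add_lt hgrowth
  have htend : Tendsto a atTop atTop := tendsto_atTop_mono' _
    ((hgrow 0).mono fun n hn => (self_le_two_pow_two_pow_add 0 n).trans (by simpa using hn.le))
    tendsto_id
  obtain ⟨σ, hσ⟩ := exists_equiv_monotone_comp htend
  rw [← σ.tsum_eq]
  exact irrational_tsum_one_div_of_monotone hσ (fun n => hpos (σ n))
    (fun J => eventually_lt_apply_of_monotone_comp hσ
      (fun _ _ h => two_pow_two_pow_monotone (by omega)) (hgrow J))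
    (σ.summable_iff.2 hsum)
end

section
/- Let β ≥ 0 be real and (a_n) a sequence of positive integers with |a_n²/a_{n+1} − β| ≤ 1/3 for all n and r = ∑_{n=1}^∞ 1/a_n < ∞. Then for every n with a_n ≥ 8(β + 1/3)², we have a_n = ⌊(r − ∑_{k=1}^{n−1} 1/a_k)^{−1} + β⌉, where ⌊x⌉ = ⌊x + 1/2⌋ denotes the nearest integer to x. -/
open Finset

/-!
Write `c = β + 1/3`. The hypothesis gives `a_m² ≤ c a_{m+1}` and `(β - 1/3) a_{m+1} ≤ a_m²`.
Once `a_n ≥ 8c²`, the terms after `a_n` grow at least geometrically with ratio `a_{n+1}/c > 1`,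
so the tail `t = ∑_{k>n} 1/a_k` satisfies `1/a_{n+1} ≤ t ≤ 1/(a_{n+1} - c)`. The remainder
`r - ∑_{k<n} 1/a_k` is `1/a_n + t`, whose inverse is `a_n/(1 + a_n t)`, and these bounds on `t`
together with `a_{n+1} ≈ a_n²/β` place it within `1/2` of `a_n - β`.
-/

lemma sq_le_mul_of_abs_sq_div_sub_le {x y β : ℝ} (hy : 0 < y) (h : |x ^ 2 / y - β| ≤ 1 / 3) :
    x ^ 2 ≤ (β + 1 / 3) * y ∧ (β - 1 / 3) * y ≤ x ^ 2 := by
  obtain ⟨hlo, hhi⟩ := abs_le.1 h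
  constructor
  · rw [← div_le_iff₀ hy]; linarith
  · rw [← le_div_iff₀ hy]; linarith

lemma Summable.tsum_sub_sum_range {G : Type*} [AddCommGroup G] [TopologicalSpace G]
    [IsTopologicalAddGroup G] [T2Space G] {f : ℕ → G} (hf : Summable f) (n : ℕ) :
    ∑' k, f k - ∑ k ∈ range n, f k = f n + ∑' k, f (n + 1 + k) := by
  rw [← hf.sum_add_tsum_nat_add (n + 1), sum_range_succ]
  simp only [add_comm _ (n + 1)]
  abel

section SquareGrowth

variable {b : ℕ → ℝ} {c : ℝ}

lemma geometric_le_of_sq_le_mul_succ (hc : 0 < c) (hb : ∀ k, b k ^ 2 ≤ c * b (k + 1))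
    (h0 : c ≤ b 0) (k : ℕ) : b 0 * (b 0 / c) ^ k ≤ b k := by
  have hb0 : 0 ≤ b 0 := hc.le.trans h0
  induction k with
  | zero => simp
  | succ k ih =>
    have hbk : b 0 ≤ b k :=
      (le_mul_of_one_le_right hb0 (one_le_pow₀ ((one_le_div hc).2 h0))).trans ih
    calc b 0 * (b 0 / c) ^ (k + 1) = b 0 * (b 0 / c) ^ k * b 0 / c := by ring
      _ ≤ b k * b k / c := by have := hb0.trans hbk; gcongr
      _ = b k ^ 2 / c := by ring
      _ ≤ b (k + 1) := by rw [div_le_iff₀ hc, mul_comm]; exact hb k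

lemma one_div_le_geometric_of_sq_le_mul_succ (hc : 0 < c) (hb : ∀ k, b k ^ 2 ≤ c * b (k + 1))
    (h0 : c ≤ b 0) (k : ℕ) : 1 / b k ≤ 1 / b 0 * (c / b 0) ^ k := by
  have hb0 : 0 < b 0 := hc.trans_le h0
  calc 1 / b k ≤ 1 / (b 0 * (b 0 / c) ^ k) :=
        one_div_le_one_div_of_le (by positivity) (geometric_le_of_sq_le_mul_succ hc hb h0 k)
    _ = 1 / b 0 * (c / b 0) ^ k := by rw [one_div, one_div, mul_inv, ← inv_pow, inv_div]

lemma one_div_pos_of_sq_le_mul_succ (hc : 0 < c) (hb : ∀ k, b k ^ 2 ≤ c * b (k + 1))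
    (h0 : c ≤ b 0) (k : ℕ) : 0 < 1 / b k := by
  have hb0 : 0 < b 0 := hc.trans_le h0
  exact one_div_pos.2 ((by positivity : 0 < b 0 * (b 0 / c) ^ k).trans_le
    (geometric_le_of_sq_le_mul_succ hc hb h0 k))

lemma summable_one_div_of_sq_le_mul_succ (hc : 0 < c) (hb : ∀ k, b k ^ 2 ≤ c * b (k + 1))
    (h0 : c < b 0) : Summable fun k => 1 / b k := by
  have hb0 : 0 < b 0 := hc.trans h0
  have hq : c / b 0 < 1 := (div_lt_one hb0).2 h0
  exact .of_nonneg_of_le (fun k => (one_div_pos_of_sq_le_mul_succ hc hb h0.le k).le)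
    (one_div_le_geometric_of_sq_le_mul_succ hc hb h0.le)
    ((summable_geometric_of_lt_one (by positivity) hq).mul_left _)

lemma tsum_one_div_le_of_sq_le_mul_succ (hc : 0 < c) (hb : ∀ k, b k ^ 2 ≤ c * b (k + 1))
    (h0 : c < b 0) : ∑' k, 1 / b k ≤ 1 / (b 0 - c) := by
  have hb0 : 0 < b 0 := hc.trans h0
  have hq : c / b 0 < 1 := (div_lt_one hb0).2 h0
  calc ∑' k, 1 / b k ≤ ∑' k, 1 / b 0 * (c / b 0) ^ k :=
        Summable.tsum_le_tsum (one_div_le_geometric_of_sq_le_mul_succ hc hb h0.le)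
          (summable_one_div_of_sq_le_mul_succ hc hb h0)
          ((summable_geometric_of_lt_one (by positivity) hq).mul_left _)
    _ = 1 / (b 0 - c) := by
      rw [tsum_mul_left, tsum_geometric_of_lt_one (by positivity) hq]
      have : b 0 - c ≠ 0 := by linarith
      field_simp

end SquareGrowth

section NearestInteger

lemma inv_one_div_add {A t : ℝ} (hA : A ≠ 0) : (1 / A + t)⁻¹ = A / (1 + A * t) := by
  field_simp

variable {A B t β : ℝ}

lemma six_mul_sq_add_lt_of_sq_le_mul (hβ : 0 ≤ β) (hA : 8 * (β + 1 / 3) ^ 2 ≤ A)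
    (hAB : A ^ 2 ≤ (β + 1 / 3) * B) :
    6 * (β + 1 / 3) ^ 2 + (β + 1 / 3) < B := by
  have hB : 64 * (β + 1 / 3) ^ 3 ≤ B := by
    refine le_of_mul_le_mul_left (a := β + 1 / 3) ?_ (by linarith)
    nlinarith
  nlinarith

lemma sub_half_le_inv_add (hβ : 0 ≤ β) (hA : 8 * (β + 1 / 3) ^ 2 ≤ A)
    (hAB : A ^ 2 ≤ (β + 1 / 3) * B) (ht0 : 0 ≤ t) (ht : t ≤ 1 / (B - (β + 1 / 3))) :
    A - 1 / 2 ≤ (1 / A + t)⁻¹ + β := by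
  have hA0 : 0 < A := by nlinarith
  have hB := six_mul_sq_add_lt_of_sq_le_mul hβ hA hAB
  have hsq : A ^ 2 * t ≤ β + 1 / 2 := by
    calc A ^ 2 * t ≤ A ^ 2 * (1 / (B - (β + 1 / 3))) := by gcongr
      _ ≤ β + 1 / 2 := by
        rw [mul_one_div, div_le_iff₀ (by nlinarith)]; nlinarith
  have : A - β - 1 / 2 ≤ A / (1 + A * t) := by
    rw [le_div_iff₀ (by positivity)]
    nlinarith [mul_nonneg hA0.le ht0]
  rw [inv_one_div_add hA0.ne']
  linarith

lemma inv_add_lt_add_half (hβ : 0 ≤ β) (hA : 8 * (β + 1 / 3) ^ 2 ≤ A)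
    (hAB : A ^ 2 ≤ (β + 1 / 3) * B) (hBA : (β - 1 / 3) * B ≤ A ^ 2) (ht : 1 / B ≤ t) :
    (1 / A + t)⁻¹ + β < A + 1 / 2 := by
  have hA0 : 0 < A := by nlinarith
  have hB : 8 * (β + 1 / 3) * A ≤ B := by nlinarith
  have hB0 : 0 < B := by nlinarith
  have ht0 : 0 < t := lt_of_lt_of_le (by positivity) ht
  have hBt : 1 ≤ B * t := by rwa [div_le_iff₀ hB0, mul_comm] at ht
  have : A / (1 + A * t) < A - β + 1 / 2 := by
    rw [div_lt_iff₀ (by positivity)]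
    nlinarith [mul_le_mul_of_nonneg_right hBA ht0.le, mul_le_mul_of_nonneg_right hB ht0.le]
  rw [inv_one_div_add hA0.ne']
  linarith

end NearestInteger

theorem main_theorem_floor_formula_general
    (β : ℝ) (hβ : 0 ≤ β)
    (a : ℕ → ℕ) (hpos : ∀ n, 0 < a n)
    (hratio : ∀ n, |(a n : ℝ) ^ 2 / (a (n + 1) : ℝ) - β| ≤ 1 / 3)
    (r : ℝ) (hr : r = ∑' n, 1 / (a n : ℝ)) :
    ∀ n, 8 * (β + 1 / 3) ^ 2 ≤ (a n : ℝ) →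
      (a n : ℤ) = round ((r - ∑ k ∈ Finset.range n, 1 / (a k : ℝ))⁻¹ + β) := by
  intro n hn
  have hstep (m : ℕ) := sq_le_mul_of_abs_sq_div_sub_le (by exact_mod_cast hpos (m + 1)) (hratio m)
  set b : ℕ → ℝ := fun k => a (n + 1 + k)
  have hb (k : ℕ) : b k ^ 2 ≤ (β + 1 / 3) * b (k + 1) := (hstep (n + 1 + k)).1
  have hAB : (a n : ℝ) ^ 2 ≤ (β + 1 / 3) * b 0 := (hstep n).1
  have hb0 : β + 1 / 3 < b 0 := by
    nlinarith [six_mul_sq_add_lt_of_sq_le_mul hβ hn hAB, sq_nonneg (β + 1 / 3)]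
  have hc : 0 < β + 1 / 3 := by linarith
  have hb_inv_pos := one_div_pos_of_sq_le_mul_succ hc hb hb0.le
  have htail : Summable fun k => 1 / b k := summable_one_div_of_sq_le_mul_succ hc hb hb0
  have hsum : Summable fun m => 1 / (a m : ℝ) :=
    (summable_nat_add_iff (n + 1)).1 (by simpa only [b, add_comm (n + 1)] using htail)
  rw [hr, hsum.tsum_sub_sum_range n, eq_comm, round_eq_iff]
  push_cast
  exact ⟨sub_half_le_inv_add hβ hn hAB (tsum_nonneg fun k => (hb_inv_pos k).le)
      (tsum_one_div_le_of_sq_le_mul_succ hc hb hb0),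
    inv_add_lt_add_half hβ hn hAB (hstep n).2 (htail.le_tsum 0 fun k _ => (hb_inv_pos k).le)⟩

theorem main_theorem_floor_formula
    (β : ℝ) (hβ : 0 ≤ β)
    (a : ℕ → ℕ) (hpos : ∀ n, 0 < a n)
    (hratio : ∀ n, |(a n : ℝ) ^ 2 / (a (n + 1) : ℝ) - β| ≤ 1 / 3)
    (hsum : Summable (fun n => 1 / (a n : ℝ)))
    (r : ℝ) (hr : r = ∑' n, 1 / (a n : ℝ)) :
    ∀ n, 8 * (β + 1 / 3) ^ 2 ≤ (a n : ℝ) →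
      (a n : ℤ) = round ((r - ∑ k ∈ Finset.range n, 1 / (a k : ℝ))⁻¹ + β) :=
  main_theorem_floor_formula_general β hβ a hpos hratio r hr
end

section
/- Let β ≥ 0 and (a_n) a sequence of positive integers with |a_n²/a_{n+1} − β| ≤ 1/3 for all n, r = ∑ 1/a_n < ∞, and lim_{n→∞} a_n²/a_{n+1} = β. Then lim_{n→∞} |(r − ∑_{k=1}^{n−1} 1/a_k)^{−1} + β − a_n| = 0. -/
open Filter Finset Topology

/-!
Let `T n = ∑_{k ≥ n} 1/a_k`. Since `a_n² / a_{n+1} → β` and `1/a_n → 0`, the ratio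
`a_n / a_{n+1}` tends to `0`, so the tails are eventually dominated by a geometric series and
`x n := a_n T (n+1) → 0`. Splitting off the first two terms of `T n` gives the exact identity
`(T n)⁻¹ + β - a_n = β - (a_n² / a_{n+1}) (1 + x (n+1)) / (1 + x n)`,
whose right-hand side tends to `β - β = 0`.
-/

section TailBounds

variable {u : ℕ → ℝ}

lemma tsum_nat_add_le_div_of_succ_le_mul {c : ℝ} (hu : ∀ k, 0 ≤ u k) (hc0 : 0 ≤ c) (hc1 : c < 1)
    {N : ℕ} (hratio : ∀ k, N ≤ k → u (k + 1) ≤ c * u k) {n : ℕ} (hn : N ≤ n) :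
    ∑' k, u (k + n) ≤ u n / (1 - c) := by
  have hgeom : ∀ k, u (k + n) ≤ c ^ k * u n := fun k => by
    simpa using le_geom (u := fun k => u (k + n)) hc0 k fun j _ => by
      simpa only [add_right_comm] using hratio (j + n) (by omega)
  have hsumm : Summable fun k => c ^ k * u n :=
    (summable_geometric_of_lt_one hc0 hc1).mul_right _
  calc ∑' k, u (k + n) ≤ ∑' k, c ^ k * u n :=
        Summable.tsum_le_tsum hgeom (Summable.of_nonneg_of_le (fun k => hu _) hgeom hsumm) hsumm
    _ = u n / (1 - c) := by rw [tsum_mul_right, tsum_geometric_of_lt_one hc0 hc1]; ring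

lemma tendsto_tsum_nat_add_succ_div_of_tendsto_ratio_zero (hu : ∀ k, 0 < u k)
    (hratio : Tendsto (fun n => u (n + 1) / u n) atTop (𝓝 0)) :
    Tendsto (fun n => (∑' k, u (k + (n + 1))) / u n) atTop (𝓝 0) := by
  obtain ⟨N, hN⟩ := eventually_atTop.mp
    (hratio.eventually (ge_mem_nhds (show (0 : ℝ) < 1 / 2 by norm_num)))
  have hhalf : ∀ k, N ≤ k → u (k + 1) ≤ 1 / 2 * u k := fun k hk => by
    have := hN k hk
    rw [div_le_iff₀ (hu k)] at this
    linarith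
  have hbound : Tendsto (fun n => 2 * (u (n + 1) / u n)) atTop (𝓝 0) := by
    simpa using hratio.const_mul 2
  refine squeeze_zero' (Eventually.of_forall fun n =>
    div_nonneg (tsum_nonneg fun k => (hu _).le) (hu n).le) ?_ hbound
  filter_upwards [eventually_ge_atTop N] with n hn
  calc (∑' k, u (k + (n + 1))) / u n ≤ u (n + 1) / (1 - 1 / 2) / u n := by
        gcongr
        · exact (hu n).le
        · exact tsum_nat_add_le_div_of_succ_le_mul (fun k => (hu k).le) (by norm_num)
            (by norm_num) hhalf (by omega)
    _ = 2 * (u (n + 1) / u n) := by ring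

end TailBounds

section PositiveSequence

variable {a : ℕ → ℝ} {β : ℝ}

lemma inv_one_div_add_add_sub_eq {A B t : ℝ} (hA : 0 < A) (hB : 0 < B) (ht : 0 ≤ t) :
    (1 / A + (1 / B + t))⁻¹ + β - A = β - A ^ 2 / B * (1 + B * t) / (1 + A * (1 / B + t)) := by
  have : 0 < 1 + A * (1 / B + t) := by positivity
  field_simp
  ring

theorem tendsto_inv_tsum_sub_sum_range_add_sub (ha : ∀ n, 0 < a n)
    (hsum : Summable fun n => 1 / a n)
    (hlim : Tendsto (fun n => a n ^ 2 / a (n + 1)) atTop (𝓝 β)) :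
    Tendsto (fun n => (∑' k, 1 / a k - ∑ k ∈ range n, 1 / a k)⁻¹ + β - a n) atTop (𝓝 0) := by
  set T : ℕ → ℝ := fun n => ∑' k, 1 / a k - ∑ k ∈ range n, 1 / a k with hT
  have hT_eq_tsum : ∀ n, T n = ∑' k, 1 / a (k + n) := fun n => by
    rw [hT, ← hsum.sum_add_tsum_nat_add n]
    ring
  have hT_succ : ∀ n, T n = 1 / a n + T (n + 1) := fun n => by
    simp only [hT, sum_range_succ]
    ring
  have hT_nonneg : ∀ n, 0 ≤ T n := fun n =>
    hT_eq_tsum n ▸ tsum_nonneg fun k => (one_div_pos.mpr (ha _)).le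
  have hratio : Tendsto (fun n => 1 / a (n + 1) / (1 / a n)) atTop (𝓝 0) := by
    simpa using (hlim.mul hsum.tendsto_atTop_zero).congr fun n => by
      field_simp [(ha n).ne', (ha (n + 1)).ne']
  have hx : Tendsto (fun n => a n * T (n + 1)) atTop (𝓝 0) :=
    (tendsto_tsum_nat_add_succ_div_of_tendsto_ratio_zero (fun n => one_div_pos.mpr (ha n))
      hratio).congr fun n => by
        rw [← hT_eq_tsum]
        field_simp [(ha n).ne']
  have hkey : ∀ n, (T n)⁻¹ + β - a n =
      β - a n ^ 2 / a (n + 1) * (1 + a (n + 1) * T (n + 2)) / (1 + a n * T (n + 1)) := fun n => by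
    rw [hT_succ n, hT_succ (n + 1)]
    exact inv_one_div_add_add_sub_eq (ha n) (ha (n + 1)) (hT_nonneg (n + 2))
  have hlim' : Tendsto (fun n => β - a n ^ 2 / a (n + 1) * (1 + a (n + 1) * T (n + 2)) /
      (1 + a n * T (n + 1))) atTop (𝓝 (β - β * (1 + 0) / (1 + 0))) :=
    tendsto_const_nhds.sub ((hlim.mul (tendsto_const_nhds.add
      (hx.comp (tendsto_add_atTop_nat 1)))).div (tendsto_const_nhds.add hx) (by norm_num))
  rw [add_zero, mul_one, div_one, sub_self] at hlim'
  exact hlim'.congr fun n => (hkey n).symm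

end PositiveSequence

theorem main_theorem_limit_general
    (β : ℝ)
    (a : ℕ → ℕ) (hpos : ∀ n, 0 < a n)
    (hsum : Summable (fun n => 1 / (a n : ℝ)))
    (hlim : Tendsto (fun n => (a n : ℝ) ^ 2 / (a (n + 1) : ℝ)) atTop (nhds β))
    (r : ℝ) (hr : r = ∑' n, 1 / (a n : ℝ)) :
    Tendsto (fun n =>
      |(r - ∑ k ∈ Finset.range n, 1 / (a k : ℝ))⁻¹ + β - (a n : ℝ)|) atTop (nhds 0) := by
  subst hr
  simpa using (tendsto_inv_tsum_sub_sum_range_add_sub (fun n => by exact_mod_cast hpos n)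
    hsum hlim).abs

theorem main_theorem_limit
    (β : ℝ) (hβ : 0 ≤ β)
    (a : ℕ → ℕ) (hpos : ∀ n, 0 < a n)
    (hratio : ∀ n, |(a n : ℝ) ^ 2 / (a (n + 1) : ℝ) - β| ≤ 1 / 3)
    (hsum : Summable (fun n => 1 / (a n : ℝ)))
    (hlim : Tendsto (fun n => (a n : ℝ) ^ 2 / (a (n + 1) : ℝ)) atTop (nhds β))
    (r : ℝ) (hr : r = ∑' n, 1 / (a n : ℝ)) :
    Tendsto (fun n =>
      |(r - ∑ k ∈ Finset.range n, 1 / (a k : ℝ))⁻¹ + β - (a n : ℝ)|) atTop (nhds 0) :=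
  main_theorem_limit_general β a hpos hsum hlim r hr
end

section
/- If (a_n) is a sequence of positive integers satisfying 2/3 ≤ a_n²/a_{n+1} ≤ 4/3 for all n and ∑_{n=1}^∞ 1/a_n = 1, then a_n = s_n for all n, where (s_n) is the Sylvester sequence defined by s_1 = 2, s_{n+1} = s_n² − s_n + 1. -/
/-!
Write `T n = ∑_{k ≥ n} 1/a_k` for the tails of the series. The upper bound `a_{n+1} ≥ 3a_n²/4`
makes the reciprocals decay doubly exponentially, so the tail after `a_n` is at most `2/a_n²`.
Hence `T n = 1/m` forces `1/a_n < 1/m ≤ 1/a_n + 2/a_n²`, which leaves only `a_n = m + 1`: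
if `a_n ≥ m + 2`, then `1/a_n + 2/a_n² < 1/(a_n - 2) ≤ 1/m`.
Starting from `T 0 = 1`, this greedy step reproduces the Sylvester identity
`1/(s_n - 1) - 1/s_n = 1/(s_{n+1} - 1)`, so by induction `T n = 1/(s_n - 1)` and `a_n = s_n`.
-/

theorem tsum_le_div_one_sub_of_le_mul {f : ℕ → ℝ} {r : ℝ} (hr₀ : 0 ≤ r) (hr₁ : r < 1)
    (hf : ∀ k, 0 ≤ f k) (hstep : ∀ k, f (k + 1) ≤ r * f k) :
    ∑' k, f k ≤ f 0 / (1 - r) := by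
  have hgeom : ∀ k, f k ≤ f 0 * r ^ k := by
    intro k
    induction k with
    | zero => simp
    | succ k ih =>
      calc f (k + 1) ≤ r * f k := hstep k
        _ ≤ r * (f 0 * r ^ k) := mul_le_mul_of_nonneg_left ih hr₀
        _ = f 0 * r ^ (k + 1) := by ring
  have hsumm : Summable fun k ↦ f 0 * r ^ k :=
    (summable_geometric_of_lt_one hr₀ hr₁).mul_left _
  calc ∑' k, f k ≤ ∑' k, f 0 * r ^ k :=
        (hsumm.of_nonneg_of_le hf hgeom).tsum_le_tsum hgeom hsumm
    _ = f 0 / (1 - r) := by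
        rw [tsum_mul_left, tsum_geometric_of_lt_one hr₀ hr₁, div_eq_mul_inv]

theorem tsum_succ_le_two_mul_sq {x : ℕ → ℝ} (hx : ∀ k, 0 ≤ x k)
    (hstep : ∀ k, x (k + 1) ≤ 4 / 3 * x k ^ 2) (h₀ : x 0 ≤ 1 / 3) :
    ∑' k, x (k + 1) ≤ 2 * x 0 ^ 2 := by
  have hle : ∀ k, x k ≤ 1 / 3 := by
    intro k
    induction k with
    | zero => exact h₀
    | succ k ih => nlinarith [hstep k, hx k]
  have hsmall : ∀ k, x (k + 1) ≤ 4 / 27 := fun k ↦ by nlinarith [hstep k, hx k, hle k]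
  have hratio : ∀ k, x (k + 1 + 1) ≤ 16 / 81 * x (k + 1) := fun k ↦ by
    nlinarith [hstep (k + 1), hx (k + 1), hsmall k]
  -- `x 1 / (1 - 16/81) ≤ 81/65 · 4/3 · x 0 ^ 2 = 108/65 · x 0 ^ 2`
  calc ∑' k, x (k + 1) ≤ x 1 / (1 - 16 / 81) :=
        tsum_le_div_one_sub_of_le_mul (by norm_num) (by norm_num) (fun k ↦ hx (k + 1)) hratio
    _ ≤ 2 * x 0 ^ 2 := by
        norm_num
        nlinarith [hstep 0, sq_nonneg (x 0)]

theorem eq_add_one_of_one_div_eq_one_div_add {A m : ℕ} {t : ℝ} (hA : 0 < A) (hm : 0 < m)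
    (ht : 0 < t) (htail : 3 ≤ A → t ≤ 2 / (A : ℝ) ^ 2) (h : 1 / (m : ℝ) = 1 / A + t) :
    A = m + 1 := by
  have hA' : (0 : ℝ) < A := by exact_mod_cast hA
  have hm' : (0 : ℝ) < m := by exact_mod_cast hm
  have hmA : m < A := by
    have : 1 / (A : ℝ) < 1 / m := by linarith
    exact_mod_cast (one_div_lt_one_div hA' hm').1 this
  by_contra hne
  have hm2 : (m : ℝ) + 2 ≤ A := by exact_mod_cast (by omega : m + 2 ≤ A)
  have hle : 1 / (m : ℝ) ≤ (A + 2) / (A : ℝ) ^ 2 := by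
    have hsplit : (A + 2) / (A : ℝ) ^ 2 = 1 / A + 2 / (A : ℝ) ^ 2 := by field_simp
    rw [h, hsplit]
    linarith [htail (by omega)]
  rw [div_le_div_iff₀ hm' (by positivity)] at hle
  nlinarith

theorem Summable.tsum_nat_add_eq_add {f : ℕ → ℝ} (hf : Summable f) (n : ℕ) :
    ∑' k, f (k + n) = f n + ∑' k, f (k + (n + 1)) := by
  rw [((summable_nat_add_iff n).2 hf).tsum_eq_zero_add, zero_add]
  simp only [Nat.add_right_comm _ 1 n, add_assoc]

theorem tsum_nat_add_succ_le_two_mul_sq {x : ℕ → ℝ} (hx : ∀ k, 0 ≤ x k)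
    (hstep : ∀ k, x (k + 1) ≤ 4 / 3 * x k ^ 2) {n : ℕ} (hn : x n ≤ 1 / 3) :
    ∑' k, x (k + (n + 1)) ≤ 2 * x n ^ 2 := by
  have := tsum_succ_le_two_mul_sq (x := fun k ↦ x (k + n)) (fun k ↦ hx _)
    (fun k ↦ by simpa only [Nat.add_right_comm _ 1 n] using hstep (k + n)) (by simpa using hn)
  simpa only [Nat.add_right_comm _ 1 n, add_assoc, zero_add] using this

theorem eq_add_one_of_tsum_one_div_eq {a : ℕ → ℕ} (hpos : ∀ n, 0 < a n)
    (hsumm : Summable fun n ↦ 1 / (a n : ℝ))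
    (hstep : ∀ n, 1 / (a (n + 1) : ℝ) ≤ 4 / 3 * (1 / (a n : ℝ)) ^ 2) {n m : ℕ} (hm : 0 < m)
    (h : ∑' k, 1 / (a (k + n) : ℝ) = 1 / m) : a n = m + 1 := by
  have hx : ∀ k, 0 < 1 / (a k : ℝ) := fun k ↦ by have := hpos k; positivity
  refine eq_add_one_of_one_div_eq_one_div_add (hpos n) hm
    (((summable_nat_add_iff (n + 1)).2 hsumm).tsum_pos (fun k ↦ (hx _).le) 0 (hx _))
    (fun h3 ↦ ?_) (h ▸ hsumm.tsum_nat_add_eq_add n)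
  have hn : 1 / (a n : ℝ) ≤ 1 / 3 :=
    one_div_le_one_div_of_le (by norm_num) (by exact_mod_cast h3)
  simpa [div_pow, div_eq_mul_inv] using
    tsum_nat_add_succ_le_two_mul_sq (fun k ↦ (hx k).le) hstep hn

theorem two_le_of_sylvester_rec {s : ℕ → ℕ} (h₀ : 2 ≤ s 0)
    (hsrec : ∀ n, s (n + 1) = s n ^ 2 - s n + 1) (n : ℕ) : 2 ≤ s n := by
  induction n with
  | zero => exact h₀
  | succ n ih =>
    rw [hsrec n, pow_two]
    have : s n * 2 ≤ s n * s n := Nat.mul_le_mul_left _ ih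
    omega

theorem one_div_sub_one_eq_of_sylvester_rec {s : ℕ → ℕ}
    (hsrec : ∀ n, s (n + 1) = s n ^ 2 - s n + 1) {n : ℕ} (h2 : 2 ≤ s n) :
    1 / ((s n - 1 : ℕ) : ℝ) = 1 / s n + 1 / ((s (n + 1) - 1 : ℕ) : ℝ) := by
  rw [hsrec n, Nat.add_sub_cancel, pow_two, ← Nat.mul_sub_one, Nat.cast_mul]
  have : (0 : ℝ) < (s n - 1 : ℕ) := by exact_mod_cast (by omega : 0 < s n - 1)
  have : (s n : ℝ) = (s n - 1 : ℕ) + 1 := by exact_mod_cast (by omega : s n = s n - 1 + 1)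
  rw [this]
  field_simp

theorem sylvester_characterization_general
    (s : ℕ → ℕ) (hs0 : s 0 = 2) (hsrec : ∀ n, s (n + 1) = (s n) ^ 2 - s n + 1)
    (a : ℕ → ℕ) (hpos : ∀ n, 0 < a n)
    (hhigh : ∀ n, (a n : ℝ) ^ 2 / (a (n + 1) : ℝ) ≤ 4 / 3)
    (hsum : ∑' n, 1 / (a n : ℝ) = 1) :
    ∀ n, a n = s n := by
  have hsumm : Summable fun n ↦ 1 / (a n : ℝ) := by
    by_contra h
    rw [tsum_eq_zero_of_not_summable h] at hsum
    norm_num at hsum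
  have hstep : ∀ n, 1 / (a (n + 1) : ℝ) ≤ 4 / 3 * (1 / (a n : ℝ)) ^ 2 := fun n ↦ by
    have hA : (0 : ℝ) < a n := by exact_mod_cast hpos n
    have hB : (0 : ℝ) < a (n + 1) := by exact_mod_cast hpos (n + 1)
    have h := hhigh n
    rw [div_le_iff₀ hB] at h
    rw [div_pow, one_pow, mul_one_div, div_le_div_iff₀ hB (by positivity)]
    linarith
  have hs2 := two_le_of_sylvester_rec hs0.ge hsrec
  have hpin : ∀ n, ∑' k, 1 / (a (k + n) : ℝ) = 1 / ((s n - 1 : ℕ) : ℝ) → a n = s n := by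
    intro n h
    have := hs2 n
    have := eq_add_one_of_tsum_one_div_eq hpos hsumm hstep (by omega) h
    omega
  have htail : ∀ n, ∑' k, 1 / (a (k + n) : ℝ) = 1 / ((s n - 1 : ℕ) : ℝ) := by
    intro n
    induction n with
    | zero => simpa [hs0] using hsum
    | succ n ih =>
      have hrec := hsumm.tsum_nat_add_eq_add n
      rw [ih, hpin n ih, one_div_sub_one_eq_of_sylvester_rec hsrec (hs2 n)] at hrec
      linarith
  exact fun n ↦ hpin n (htail n)

theorem sylvester_characterization
    (s : ℕ → ℕ) (hs0 : s 0 = 2) (hsrec : ∀ n, s (n + 1) = (s n) ^ 2 - s n + 1)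
    (a : ℕ → ℕ) (hpos : ∀ n, 0 < a n)
    (hlow : ∀ n, (2 : ℝ) / 3 ≤ (a n : ℝ) ^ 2 / (a (n + 1) : ℝ))
    (hhigh : ∀ n, (a n : ℝ) ^ 2 / (a (n + 1) : ℝ) ≤ 4 / 3)
    (hsum : ∑' n, 1 / (a n : ℝ) = 1) :
    ∀ n, a n = s n :=
  sylvester_characterization_general s hs0 hsrec a hpos hhigh hsum
end

section
/- If (a_n) is a sequence of positive integers satisfying a_n²/a_{n+1} ≤ 2/3 for all n and ∑_{n=1}^∞ 1/a_n = (5 − √5)/2, then a_n = F_{2^n} for all n, where F is the Fibonacci sequence with F_1 = F_2 = 1. -/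
/-!
Let `T n = ∑_{k ≥ n} 1 / a k`. Since `a (k + 1) ≥ (3 / 2) a k ^ 2 ≥ (3 / 2) a n a k` for `k ≥ n`,
the tail `T n` is dominated by a geometric series of ratio `2 / (3 a n)`, which gives
`1 / T n < a n ≤ 1 / T n + 2 / 3`: the integer `a n` is determined by `T n`. With
`y = φ ^ 2 ^ (n + 1)`, the value `T n = √5 / (y - 1)` thus forces `a n = (y - y⁻¹) / √5 = F (2 ^ (n + 1))`,
and then `T (n + 1) = T n - 1 / a n = √5 / (y ^ 2 - 1)`; the hypothesis on the sum is the case `n = 0`.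
-/

open Real goldenRatio

noncomputable def tailInvSum (u : ℕ → ℝ) (n : ℕ) : ℝ := ∑' k, (u (k + n))⁻¹

theorem two_div_three_mul_lt_one {x : ℝ} (hx : 2 / 3 < x) : 2 / (3 * x) < 1 := by
  rw [div_lt_one (by linarith)]
  linarith

section SquareGrowth

variable {u : ℕ → ℝ} (hu : ∀ n, 2 / 3 < u n) (hgrowth : ∀ n, 3 * u n ^ 2 ≤ 2 * u (n + 1))
include hu hgrowth

theorem monotone_of_sq_growth : Monotone u :=
  monotone_nat_of_le_succ fun n => by nlinarith [hu n, hgrowth n]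

theorem inv_le_geometric (n k : ℕ) : (u (k + n))⁻¹ ≤ (u n)⁻¹ * (2 / (3 * u n)) ^ k := by
  have hpos : ∀ m, 0 < u m := fun m => by linarith [hu m]
  induction k with
  | zero => simp
  | succ k ih =>
    have hmono : u n ≤ u (k + n) := monotone_of_sq_growth hu hgrowth (Nat.le_add_left n k)
    have hstep : 3 * u n * u (k + n) / 2 ≤ u (k + 1 + n) := by
      rw [add_right_comm]
      nlinarith [hgrowth (k + n), hpos (k + n)]
    have hr : 0 ≤ 2 / (3 * u n) := by have := hpos n; positivity
    calc (u (k + 1 + n))⁻¹ ≤ (3 * u n * u (k + n) / 2)⁻¹ :=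
          inv_anti₀ (by have := hpos n; have := hpos (k + n); positivity) hstep
      _ = 2 / (3 * u n) * (u (k + n))⁻¹ := by field_simp
      _ ≤ 2 / (3 * u n) * ((u n)⁻¹ * (2 / (3 * u n)) ^ k) := by gcongr
      _ = (u n)⁻¹ * (2 / (3 * u n)) ^ (k + 1) := by ring

theorem summable_inv_of_sq_growth (n : ℕ) : Summable fun k => (u (k + n))⁻¹ := by
  have hpos : 0 < u n := by linarith [hu n]
  exact Summable.of_nonneg_of_le (fun k => inv_nonneg.2 (by linarith [hu (k + n)]))
    (inv_le_geometric hu hgrowth n)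
    ((summable_geometric_of_lt_one (by positivity) (two_div_three_mul_lt_one (hu n))).mul_left _)

theorem tailInvSum_le (n : ℕ) : tailInvSum u n ≤ 3 / (3 * u n - 2) := by
  have hpos : 0 < u n := by linarith [hu n]
  have hr₀ : 0 ≤ 2 / (3 * u n) := by positivity
  have hr₁ := two_div_three_mul_lt_one (hu n)
  calc tailInvSum u n ≤ ∑' k, (u n)⁻¹ * (2 / (3 * u n)) ^ k :=
        Summable.tsum_le_tsum (inv_le_geometric hu hgrowth n)
          (summable_inv_of_sq_growth hu hgrowth n) ((summable_geometric_of_lt_one hr₀ hr₁).mul_left _)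
    _ = 3 / (3 * u n - 2) := by
      have : 3 * u n - 2 ≠ 0 := by linarith [hu n]
      rw [tsum_mul_left, tsum_geometric_of_lt_one hr₀ hr₁]
      field_simp

theorem tailInvSum_eq_inv_add (n : ℕ) : tailInvSum u n = (u n)⁻¹ + tailInvSum u (n + 1) := by
  rw [tailInvSum, (summable_inv_of_sq_growth hu hgrowth n).tsum_eq_zero_add, zero_add, tailInvSum]
  simp only [add_right_comm _ 1 n, add_assoc]

theorem inv_lt_tailInvSum (n : ℕ) : (u n)⁻¹ < tailInvSum u n := by
  rw [tailInvSum_eq_inv_add hu hgrowth, lt_add_iff_pos_right]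
  exact (summable_inv_of_sq_growth hu hgrowth _).tsum_pos
    (fun k => inv_nonneg.2 (by linarith [hu (k + (n + 1))])) 0 (inv_pos.2 (by linarith [hu (0 + (n + 1))]))

theorem tailInvSum_pos (n : ℕ) : 0 < tailInvSum u n :=
  (inv_pos.2 (by linarith [hu n])).trans (inv_lt_tailInvSum hu hgrowth n)

theorem inv_tailInvSum_lt (n : ℕ) : (tailInvSum u n)⁻¹ < u n :=
  (inv_lt_comm₀ (tailInvSum_pos hu hgrowth n) (by linarith [hu n])).2
    (inv_lt_tailInvSum hu hgrowth n)

theorem le_inv_tailInvSum_add (n : ℕ) : u n ≤ (tailInvSum u n)⁻¹ + 2 / 3 := by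
  have h := inv_anti₀ (tailInvSum_pos hu hgrowth n) (tailInvSum_le hu hgrowth n)
  rw [inv_div] at h
  linarith

end SquareGrowth

theorem goldenConj_pow_two_mul (m : ℕ) : ψ ^ (2 * m) = (φ ^ (2 * m))⁻¹ := by
  refine eq_inv_of_mul_eq_one_left ?_
  rw [← mul_pow, mul_comm, goldenRatio_mul_goldenConj, pow_mul, neg_one_sq, one_pow]

theorem coe_fib_two_mul (m : ℕ) :
    (Nat.fib (2 * m) : ℝ) = (φ ^ (2 * m) - (φ ^ (2 * m))⁻¹) / √5 := by
  rw [coe_fib_eq, goldenConj_pow_two_mul]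

section

variable {y : ℝ} (hy : 1 < y)
include hy

theorem sub_one_div_sqrt_five_lt : (y - 1) / √5 < (y - y⁻¹) / √5 := by
  gcongr
  exact inv_lt_one_of_one_lt₀ hy

theorem sub_inv_div_sqrt_five_lt : (y - y⁻¹) / √5 < (y - 1) / √5 + 1 := by
  have h5 : 1 < √5 := by rw [lt_sqrt zero_le_one]; norm_num
  have hy' : 0 < y⁻¹ := inv_pos.2 (zero_lt_one.trans hy)
  rw [← sub_lt_iff_lt_add', ← sub_div, div_lt_one (zero_lt_one.trans h5)]
  linarith

theorem sqrt_five_div_sub_one_sub_inv :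
    √5 / (y - 1) - ((y - y⁻¹) / √5)⁻¹ = √5 / (y ^ 2 - 1) := by
  have h0 : y ≠ 0 := by linarith
  have h1 : y - 1 ≠ 0 := by linarith
  have h2 : y + 1 ≠ 0 := by linarith
  have h3 : y ^ 2 - 1 ≠ 0 := by nlinarith
  have h4 : y - y⁻¹ = (y ^ 2 - 1) / y := by field_simp
  rw [h4, inv_div, div_div_eq_mul_div]
  field_simp
  ring

end

theorem Nat.eq_of_mem_Ioo_of_mem_Ioo {x : ℝ} {m k : ℕ} (hm : (m : ℝ) ∈ Set.Ioo x (x + 1))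
    (hk : (k : ℝ) ∈ Set.Ioo x (x + 1)) : m = k := by
  have h₁ : m < k + 1 := by exact_mod_cast (show (m : ℝ) < k + 1 by linarith [hm.2, hk.1])
  have h₂ : k < m + 1 := by exact_mod_cast (show (k : ℝ) < m + 1 by linarith [hm.1, hk.2])
  omega

theorem eq_and_tailInvSum_succ_of_tailInvSum_eq {a : ℕ → ℕ} (hu : ∀ n, 2 / 3 < (a n : ℝ))
    (hgrowth : ∀ n, 3 * (a n : ℝ) ^ 2 ≤ 2 * a (n + 1)) {n F : ℕ} {y : ℝ} (hy : 1 < y)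
    (hT : tailInvSum (fun n => (a n : ℝ)) n = √5 / (y - 1)) (hF : (F : ℝ) = (y - y⁻¹) / √5) :
    a n = F ∧ tailInvSum (fun n => (a n : ℝ)) (n + 1) = √5 / (y ^ 2 - 1) := by
  have hinv : (tailInvSum (fun n => (a n : ℝ)) n)⁻¹ = (y - 1) / √5 := by rw [hT, inv_div]
  have han : a n = F := by
    refine Nat.eq_of_mem_Ioo_of_mem_Ioo (x := (y - 1) / √5) ⟨?_, ?_⟩ ⟨?_, ?_⟩
    · exact hinv ▸ inv_tailInvSum_lt hu hgrowth n
    · linarith [hinv ▸ le_inv_tailInvSum_add hu hgrowth n]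
    · exact hF ▸ sub_one_div_sqrt_five_lt hy
    · exact hF ▸ sub_inv_div_sqrt_five_lt hy
  refine ⟨han, ?_⟩
  rw [← sqrt_five_div_sub_one_sub_inv hy, ← hT, ← hF, ← han, tailInvSum_eq_inv_add hu hgrowth n]
  ring

theorem millin_characterization
    (a : ℕ → ℕ) (hpos : ∀ n, 0 < a n)
    (hratio : ∀ n, (a n : ℝ) ^ 2 / (a (n + 1) : ℝ) ≤ 2 / 3)
    (hsum : ∑' n, 1 / (a n : ℝ) = (5 - Real.sqrt 5) / 2) :
    ∀ n, a n = Nat.fib (2 ^ (n + 1)) := by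
  have hu : ∀ n, 2 / 3 < (a n : ℝ) := fun n => by
    have : (1 : ℝ) ≤ a n := by exact_mod_cast hpos n
    linarith
  have hgrowth : ∀ n, 3 * (a n : ℝ) ^ 2 ≤ 2 * a (n + 1) := fun n => by
    have h := hratio n
    rw [div_le_iff₀ (by exact_mod_cast hpos (n + 1))] at h
    linarith
  have hy : ∀ n, 1 < φ ^ 2 ^ (n + 1) := fun n => one_lt_pow₀ one_lt_goldenRatio (by positivity)
  have hfib : ∀ n, (Nat.fib (2 ^ (n + 1)) : ℝ) = (φ ^ 2 ^ (n + 1) - (φ ^ 2 ^ (n + 1))⁻¹) / √5 :=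
    fun n => by rw [pow_succ', coe_fib_two_mul]
  have htail : ∀ n, tailInvSum (fun n => (a n : ℝ)) n = √5 / (φ ^ 2 ^ (n + 1) - 1) := by
    intro n
    induction n with
    | zero =>
      have h5 : √5 ^ 2 = 5 := sq_sqrt (by norm_num)
      simp only [tailInvSum, add_zero, ← one_div, hsum, zero_add, pow_one, goldenRatio_sq,
        add_sub_cancel_right]
      field_simp
      linear_combination -h5
    | succ n ih =>
      rw [pow_succ 2 (n + 1), pow_mul]
      exact (eq_and_tailInvSum_succ_of_tailInvSum_eq hu hgrowth (hy n) ih (hfib n)).2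
  exact fun n => (eq_and_tailInvSum_succ_of_tailInvSum_eq hu hgrowth (hy n) (htail n) (hfib n)).1
end

section
/- The Millin series identity: ∑_{n=1}^∞ 1/F_{2^n} = (5 − √5)/2, where F is the Fibonacci sequence. -/
/-!
For even `m ≥ 2`, the identity `F_{2m} F_{m-1} - F_m F_{2m-1} = F_m` (a consequence of Cassini's
identity) says `1 / F_{2m} = F_{m-1} / F_m - F_{2m-1} / F_{2m}`. Taking `m = 2, 4, 8, …` the series
telescopes: after its first term `1 / F_2 = 1` it sums to `F_1 / F_2 - lim F_{n-1} / F_n = 1 + ψ`,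
where `ψ = (1 - √5) / 2`, so the total is `2 + ψ = (5 - √5) / 2`.
-/

open Nat Real Filter Topology
open scoped goldenRatio

theorem Nat.fib_two_mul_add_two_mul_fib_sub_fib_succ_mul_fib_two_mul_add_one (m : ℕ) :
    (fib (2 * m + 2) * fib m - fib (m + 1) * fib (2 * m + 1) : ℤ) =
      (-1) ^ (m + 1) * fib (m + 1) := by
  have cassini := Int.fib_succ_mul_fib_pred_sub_fib_sq (m + 1)
  rw [add_sub_cancel_right] at cassini
  simp only [← Nat.cast_add_one, Int.fib_natCast, Int.natAbs_natCast, fib_add_two] at cassini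
  push_cast [fib_two_mul_add_two, fib_two_mul_add_one] at cassini ⊢
  linear_combination (fib (m + 1) : ℤ) * cassini

theorem Nat.one_div_fib_two_mul_of_even {m : ℕ} (hm : Even m) (hm₀ : m ≠ 0) :
    (1 / fib (2 * m) : ℝ) = fib (m - 1) / fib m - fib (2 * m - 1) / fib (2 * m) := by
  obtain ⟨k, rfl⟩ := exists_eq_add_one_of_ne_zero hm₀
  have key := fib_two_mul_add_two_mul_fib_sub_fib_succ_mul_fib_two_mul_add_one k
  rw [hm.neg_one_pow, one_mul] at key
  have hk : (0 : ℝ) < fib (k + 1) := by exact_mod_cast fib_pos.2 k.succ_pos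
  have h2k : (0 : ℝ) < fib (2 * k + 2) := by exact_mod_cast fib_pos.2 (by omega)
  rw [show 2 * (k + 1) = 2 * k + 2 by ring, add_tsub_cancel_right,
    show 2 * k + 2 - 1 = 2 * k + 1 by omega]
  field_simp
  exact_mod_cast key.symm

theorem tendsto_fib_pred_div_fib_atTop :
    Tendsto (fun n ↦ (fib (n - 1) / fib n : ℝ)) atTop (𝓝 (-ψ)) :=
  (tendsto_add_atTop_iff_nat 1).1 <| by simpa using tendsto_fib_div_fib_succ_atTop

theorem Real.hasSum_sub_succ_of_antitone {b : ℕ → ℝ} {l : ℝ} (hb : Antitone b)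
    (h : Tendsto b atTop (𝓝 l)) : HasSum (fun n ↦ b n - b (n + 1)) (b 0 - l) := by
  rw [hasSum_iff_tendsto_nat_of_nonneg (fun n ↦ sub_nonneg.2 (hb n.le_succ))]
  simpa only [Finset.sum_range_sub'] using tendsto_const_nhds.sub h

theorem millin_series :
    ∑' n : ℕ, 1 / (Nat.fib (2 ^ (n + 1)) : ℝ) = (5 - Real.sqrt 5) / 2 := by
  set b : ℕ → ℝ := fun n ↦ fib (2 ^ (n + 1) - 1) / fib (2 ^ (n + 1))
  have hterm (n : ℕ) : (1 / fib (2 ^ (n + 2)) : ℝ) = b n - b (n + 1) := by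
    have h := one_div_fib_two_mul_of_even (even_two.pow_of_ne_zero n.succ_ne_zero) (by positivity)
    rwa [← _root_.pow_succ'] at h
  have hb : Antitone b := antitone_nat_of_succ_le fun n ↦ by
    rw [← sub_nonneg, ← hterm]
    positivity
  have hlim : Tendsto b atTop (𝓝 (-ψ)) :=
    tendsto_fib_pred_div_fib_atTop.comp <|
      (tendsto_pow_atTop_atTop_of_one_lt one_lt_two).comp (tendsto_add_atTop_nat 1)
  have htail := Real.hasSum_sub_succ_of_antitone hb hlim
  simp_rw [← hterm] at htail
  have htotal :
      b 0 - -ψ = (5 - √5) / 2 - ∑ i ∈ Finset.range 1, 1 / (fib (2 ^ (i + 1)) : ℝ) := by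
    simp only [b, Finset.sum_range_one, zero_add, pow_one, Nat.add_one_sub_one, fib_one, fib_two,
      goldenConj]
    ring
  rw [htotal] at htail
  exact ((hasSum_nat_add_iff' 1).1 htail).tsum_eq
end

section
/- The set of α ∈ (1, ∞) such that ⌊α^{2^n}⌋ is not a Type 2 irrationality sequence is countable. Here an increasing sequence of positive integers (a_n) is a Type 2 irrationality sequence if for every sequence of positive integers (b_n) with b_n/a_n → 1, the sum ∑ 1/b_n is irrational. -/
open Filter Finset

/-- A nondecreasing sequence of positive integers `a` is a Type 2 irrationality
sequence if for every sequence of positive integers `b` with `b n / a n → 1`,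
the reciprocal sum of `b` is irrational. -/
def IsType2IrrationalitySequence (a : ℕ → ℕ) : Prop :=
  Monotone a ∧ (∀ n, 0 < a n) ∧
    ∀ b : ℕ → ℕ, (∀ n, 0 < b n) →
      Tendsto (fun n => (b n : ℝ) / (a n : ℝ)) atTop (nhds 1) →
      Irrational (∑' n, 1 / (b n : ℝ))

open Topology

/-!
If `⌊α ^ 2 ^ (n + 1)⌋` is not a Type 2 irrationality sequence, some `b n ~ α ^ 2 ^ (n + 1)` has
rational reciprocal sum `a / q`. Then `b (n + 1) ~ b n ^ 2`, so the tail sums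
`T n = ∑_{i ≥ n} 1 / b i` satisfy `T n ~ 1 / b n`, and the integers `Q n = q * b 0 ⋯ b (n - 1)`,
`A n = Q n * T n` obey `Q (n + 1) = b n * Q n`, `A (n + 1) = b n * A n - Q n` and
`A (n + 1) / A n → 1`. Once that ratio stays in `(1/2, 3/2)`, the pair `(Q n, A n)` determines
`b n`, hence the whole tail of `b` from some `N` on, and the tail of `b` determines `α`.
So every bad `α` is pinned down by a triple `(N, Q N, A N) ∈ ℕ × ℤ × ℤ`.
-/

section TailSums

variable {f : ℕ → ℝ}

lemma tsum_nat_add_le_two_mul (hf : ∀ n, 0 ≤ f n) {m : ℕ}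
    (hhalf : ∀ k, m ≤ k → f (k + 1) ≤ f k / 2) : ∑' i, f (i + m) ≤ 2 * f m := by
  have hgeom : ∀ i, f (i + m) ≤ (1 / 2) ^ i * f m := fun i => by
    simpa using le_geom (u := fun i => f (i + m)) (c := 1 / 2) (by norm_num) i fun k _ => by
      rw [add_right_comm]; linarith [hhalf (k + m) (Nat.le_add_left m k)]
  have hsum : Summable fun i => (1 / 2 : ℝ) ^ i * f m := summable_geometric_two.mul_right _
  calc ∑' i, f (i + m) ≤ ∑' i, (1 / 2 : ℝ) ^ i * f m :=
        (hsum.of_nonneg_of_le (fun i => hf _) hgeom).tsum_le_tsum hgeom hsum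
    _ = 2 * f m := by rw [tsum_mul_right, tsum_geometric_two]

lemma summable_of_tendsto_ratio_zero (hf : ∀ n, 0 < f n)
    (hratio : Tendsto (fun n => f (n + 1) / f n) atTop (𝓝 0)) : Summable f :=
  summable_of_ratio_test_tendsto_lt_one zero_lt_one (.of_forall fun n => (hf n).ne') <| by
    simpa only [Real.norm_of_nonneg (hf _).le] using hratio

lemma tendsto_tsum_nat_add_div_of_tendsto_ratio_zero (hf : ∀ n, 0 < f n)
    (hratio : Tendsto (fun n => f (n + 1) / f n) atTop (𝓝 0)) :
    Tendsto (fun n => (∑' i, f (i + n)) / f n) atTop (𝓝 1) := by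
  have hsum := summable_of_tendsto_ratio_zero hf hratio
  obtain ⟨N, hN⟩ := eventually_atTop.1 (hratio.eventually_le_const (by norm_num : (0 : ℝ) < 1 / 2))
  have hhalf : ∀ k, N ≤ k → f (k + 1) ≤ f k / 2 := fun k hk => by
    have := hN k hk; rw [div_le_iff₀ (hf k)] at this; linarith
  have hnext : Tendsto (fun n => (∑' i, f (i + (n + 1))) / f n) atTop (𝓝 0) := by
    refine squeeze_zero' (.of_forall fun n => div_nonneg (tsum_nonneg fun i => (hf _).le) (hf n).le)
      ?_ (by simpa using hratio.const_mul 2)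
    filter_upwards [eventually_ge_atTop N] with n hn
    rw [mul_div_assoc']
    exact div_le_div_of_nonneg_right (tsum_nat_add_le_two_mul (fun k => (hf k).le)
      fun k hk => hhalf k (by omega)) (hf n).le
  have hlim : Tendsto (fun n => 1 + (∑' i, f (i + (n + 1))) / f n) atTop (𝓝 1) := by
    simpa using hnext.const_add 1
  refine hlim.congr fun n => ?_
  rw [((summable_nat_add_iff n).2 hsum).tsum_eq_zero_add, zero_add, add_div, div_self (hf n).ne']
  simp only [add_right_comm _ 1 n, add_assoc]

end TailSums

lemma eq_one_of_tendsto_pow_comp {x : ℝ} (hx : 0 < x) {e : ℕ → ℕ} (he : Tendsto e atTop atTop)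
    (hlim : Tendsto (fun n => x ^ e n) atTop (𝓝 1)) : x = 1 := by
  rcases lt_trichotomy x 1 with hlt | heq | hgt
  · exact absurd (tendsto_nhds_unique ((tendsto_pow_atTop_nhds_zero_of_lt_one hx.le hlt).comp he)
      hlim) zero_ne_one
  · exact heq
  · exact absurd hlim (not_tendsto_nhds_of_tendsto_atTop
      ((tendsto_pow_atTop_atTop_of_one_lt hgt).comp he) 1)

lemma tendsto_two_pow_succ_atTop : Tendsto (fun n : ℕ => 2 ^ (n + 1)) atTop atTop :=
  (tendsto_pow_atTop_atTop_of_one_lt one_lt_two).comp (tendsto_add_atTop_nat 1)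

section DoublyExponential

variable {α : ℝ} {c : ℕ → ℝ}

lemma eq_of_tendsto_div_pow_two_pow {β : ℝ} (hα : 0 < α) (hβ : 0 < β)
    (hcα : Tendsto (fun n => c n / α ^ 2 ^ (n + 1)) atTop (𝓝 1))
    (hcβ : Tendsto (fun n => c n / β ^ 2 ^ (n + 1)) atTop (𝓝 1)) : α = β := by
  have hratio : Tendsto (fun n => (β / α) ^ 2 ^ (n + 1)) atTop (𝓝 1) := by
    have hquot : Tendsto (fun n => (c n / α ^ 2 ^ (n + 1)) / (c n / β ^ 2 ^ (n + 1))) atTop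
        (𝓝 (1 / 1)) := hcα.div hcβ one_ne_zero
    rw [div_one] at hquot
    refine hquot.congr' ?_
    filter_upwards [hcα.eventually_ne one_ne_zero] with n hn
    have hc : c n ≠ 0 := by rintro h; simp [h] at hn
    rw [div_pow]
    field_simp
  have := eq_one_of_tendsto_pow_comp (div_pos hβ hα) tendsto_two_pow_succ_atTop hratio
  rw [div_eq_one_iff_eq hα.ne'] at this
  exact this.symm

lemma tendsto_sq_div_succ_of_tendsto_div_pow_two_pow (hα : 0 < α)
    (hc : Tendsto (fun n => c n / α ^ 2 ^ (n + 1)) atTop (𝓝 1)) :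
    Tendsto (fun n => c n ^ 2 / c (n + 1)) atTop (𝓝 1) := by
  have hquot : Tendsto (fun n => (c n / α ^ 2 ^ (n + 1)) ^ 2 / (c (n + 1) / α ^ 2 ^ (n + 1 + 1)))
      atTop (𝓝 (1 ^ 2 / 1)) := (hc.pow 2).div (hc.comp (tendsto_add_atTop_nat 1)) one_ne_zero
  rw [one_pow, div_one] at hquot
  refine hquot.congr fun n => ?_
  have hx : α ^ 2 ^ (n + 1) ≠ 0 := by positivity
  rw [pow_succ 2 (n + 1), pow_mul, div_pow]
  field_simp

lemma tendsto_div_succ_of_tendsto_div_pow_two_pow (hα : 1 < α) (hc0 : ∀ n, 0 < c n)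
    (hc : Tendsto (fun n => c n / α ^ 2 ^ (n + 1)) atTop (𝓝 1)) :
    Tendsto (fun n => c n / c (n + 1)) atTop (𝓝 0) := by
  have hctop : Tendsto c atTop atTop := by
    refine (hc.pos_mul_atTop one_pos ((tendsto_pow_atTop_atTop_of_one_lt hα).comp
      tendsto_two_pow_succ_atTop)).congr fun n => ?_
    have : α ^ 2 ^ (n + 1) ≠ 0 := by positivity
    simp [this]
  refine ((tendsto_sq_div_succ_of_tendsto_div_pow_two_pow (by linarith) hc).div_atTop
    hctop).congr fun n => ?_
  have := (hc0 n).ne'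
  field_simp

end DoublyExponential

lemma eq_of_two_mul_sub_mem_Ioo {a q m m' : ℤ} (hm : 2 * (m * a - q) ∈ Set.Ioo a (3 * a))
    (hm' : 2 * (m' * a - q) ∈ Set.Ioo a (3 * a)) : m = m' := by
  rw [Set.mem_Ioo] at hm hm'
  have hlt : (m - m' - 1) * a < 0 := by linarith
  have hgt : 0 < (m - m' + 1) * a := by linarith
  have ha : 0 < a := by linarith
  have h1 : m - m' - 1 < 0 := neg_of_mul_neg_left hlt ha.le
  have h2 : 0 < m - m' + 1 := pos_of_mul_pos_left hgt ha.le
  omega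

def IsRigidFrom (b : ℕ → ℕ) (Q A : ℕ → ℤ) (N : ℕ) : Prop :=
  ∀ n, N ≤ n → Q (n + 1) = b n * Q n ∧ A (n + 1) = b n * A n - Q n ∧
    0 < A n ∧ A n < 2 * A (n + 1) ∧ 2 * A (n + 1) < 3 * A n

/-- `A (n + 1) = b n * A n - Q n` lies in an open interval of length `A n`, so `(Q n, A n)`
determines `b n`. -/
lemma IsRigidFrom.eq {b b' : ℕ → ℕ} {Q A Q' A' : ℕ → ℤ} {N : ℕ} (h : IsRigidFrom b Q A N)
    (h' : IsRigidFrom b' Q' A' N) (hQ : Q N = Q' N) (hA : A N = A' N) :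
    ∀ n, N ≤ n → b n = b' n := by
  have hstep : ∀ n, N ≤ n → Q n = Q' n → A n = A' n → b n = b' n := by
    intro n hn hQn hAn
    obtain ⟨-, hA1, -, hlo, hhi⟩ := h n hn
    obtain ⟨-, hA1', -, hlo', hhi'⟩ := h' n hn
    rw [hA1] at hlo hhi
    rw [hA1', ← hQn, ← hAn] at hlo' hhi'
    exact_mod_cast eq_of_two_mul_sub_mem_Ioo ⟨hlo, hhi⟩ ⟨hlo', hhi'⟩
  have hagree : ∀ n, N ≤ n → Q n = Q' n ∧ A n = A' n := by
    intro n hn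
    induction n, hn using Nat.le_induction with
    | base => exact ⟨hQ, hA⟩
    | succ n hn ih =>
      have hb := hstep n hn ih.1 ih.2
      rw [(h n hn).1, (h' n hn).1, (h n hn).2.1, (h' n hn).2.1, hb, ih.1, ih.2]
      exact ⟨rfl, rfl⟩
  exact fun n hn => hstep n hn (hagree n hn).1 (hagree n hn).2

section TailFractions

variable (b : ℕ → ℕ) (q a : ℤ)

def tailDen : ℕ → ℤ
  | 0 => q
  | n + 1 => b n * tailDen n

def tailNum : ℕ → ℤ
  | 0 => a
  | n + 1 => b n * tailNum n - tailDen b q n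

variable {b q a}

lemma tailDen_pos (hb : ∀ n, 0 < b n) (hq : 0 < q) (n : ℕ) : 0 < tailDen b q n := by
  induction n with
  | zero => exact hq
  | succ n ih => exact mul_pos (by exact_mod_cast hb n) ih

lemma tailNum_eq_tailDen_mul_tsum (hb : ∀ n, 0 < b n) (hsum : Summable fun n => 1 / (b n : ℝ))
    (ha : (a : ℝ) = q * ∑' n, 1 / (b n : ℝ)) (n : ℕ) :
    (tailNum b q a n : ℝ) = tailDen b q n * ∑' i, 1 / (b (i + n) : ℝ) := by
  induction n with
  | zero => simpa [tailNum, tailDen] using ha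
  | succ n ih =>
    have hsplit := ((summable_nat_add_iff n).2 hsum).tsum_eq_zero_add
    simp only [zero_add, add_assoc, add_comm 1 n] at hsplit
    have hbn : (b n : ℝ) ≠ 0 := by exact_mod_cast (hb n).ne'
    simp only [tailNum, tailDen]
    push_cast
    rw [ih, hsplit]
    field_simp
    ring

/-- With `T n ~ 1 / b n` the tail sum, `A (n + 1) / A n = b n * T (n + 1) / T n` tends to `1`
because `b (n + 1) ~ b n ^ 2`. -/
lemma exists_isRigidFrom_tailNum (hb : ∀ n, 0 < b n) (hq : 0 < q)
    (ha : (a : ℝ) = q * ∑' n, 1 / (b n : ℝ))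
    (hsq : Tendsto (fun n => (b n : ℝ) ^ 2 / b (n + 1)) atTop (𝓝 1))
    (hsucc : Tendsto (fun n => (b n : ℝ) / b (n + 1)) atTop (𝓝 0)) :
    ∃ N, IsRigidFrom b (tailDen b q) (tailNum b q a) N := by
  have hbR : ∀ n, (0 : ℝ) < b n := fun n => by exact_mod_cast hb n
  have hf : ∀ n, (0 : ℝ) < 1 / b n := fun n => one_div_pos.2 (hbR n)
  have hratio : Tendsto (fun n => 1 / (b (n + 1) : ℝ) / (1 / b n)) atTop (𝓝 0) :=
    hsucc.congr fun n => by field_simp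
  have hsum := summable_of_tendsto_ratio_zero hf hratio
  set T : ℕ → ℝ := fun n => ∑' i, 1 / (b (i + n) : ℝ)
  have hT : ∀ n, 0 < T n := fun n =>
    ((summable_nat_add_iff n).2 hsum).tsum_pos (fun i => (hf _).le) 0 (hf _)
  have hA : ∀ n, (tailNum b q a n : ℝ) = tailDen b q n * T n :=
    tailNum_eq_tailDen_mul_tsum hb hsum ha
  have hApos : ∀ n, 0 < tailNum b q a n := fun n => by
    have : (0 : ℝ) < tailNum b q a n := by
      rw [hA]; exact mul_pos (by exact_mod_cast tailDen_pos hb hq n) (hT n)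
    exact_mod_cast this
  have htail : Tendsto (fun n => T n / (1 / b n)) atTop (𝓝 1) :=
    tendsto_tsum_nat_add_div_of_tendsto_ratio_zero hf hratio
  have hquot : Tendsto (fun n => (tailNum b q a (n + 1) : ℝ) / tailNum b q a n) atTop (𝓝 1) := by
    have hlim : Tendsto (fun n => (b n : ℝ) ^ 2 / b (n + 1) * (T (n + 1) / (1 / b (n + 1))) /
        (T n / (1 / b n))) atTop (𝓝 (1 * 1 / 1)) :=
      (hsq.mul (htail.comp (tendsto_add_atTop_nat 1))).div htail one_ne_zero
    rw [mul_one, div_one] at hlim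
    refine hlim.congr fun n => ?_
    rw [hA, hA]
    simp only [tailDen]
    have := (hbR n).ne'
    have := (hbR (n + 1)).ne'
    have := (hT n).ne'
    have : (tailDen b q n : ℝ) ≠ 0 := by exact_mod_cast (tailDen_pos hb hq n).ne'
    push_cast
    field_simp
  obtain ⟨N, hN⟩ := eventually_atTop.1 ((hquot.eventually_const_lt (by norm_num : (1 : ℝ) / 2 < 1)).and
    (hquot.eventually_lt_const (by norm_num : (1 : ℝ) < 3 / 2)))
  refine ⟨N, fun n hn => ⟨rfl, rfl, hApos n, ?_⟩⟩
  have hAR : (0 : ℝ) < tailNum b q a n := by exact_mod_cast hApos n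
  obtain ⟨hlo, hhi⟩ := hN n hn
  rw [lt_div_iff₀ hAR] at hlo
  rw [div_lt_iff₀ hAR] at hhi
  have hlo' : (tailNum b q a n : ℝ) < 2 * tailNum b q a (n + 1) := by linarith
  have hhi' : 2 * (tailNum b q a (n + 1) : ℝ) < 3 * tailNum b q a n := by linarith
  exact ⟨by exact_mod_cast hlo', by exact_mod_cast hhi'⟩

end TailFractions

section FloorPowers

lemma tendsto_div_of_tendsto_div_natFloor {x c : ℕ → ℝ} (hx : Tendsto x atTop atTop)
    (hc : Tendsto (fun n => c n / ⌊x n⌋₊) atTop (𝓝 1)) :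
    Tendsto (fun n => c n / x n) atTop (𝓝 1) := by
  have hlim : Tendsto (fun n => c n / ⌊x n⌋₊ * (⌊x n⌋₊ / x n)) atTop (𝓝 (1 * 1)) :=
    hc.mul (tendsto_nat_floor_div_atTop.comp hx)
  rw [mul_one] at hlim
  refine hlim.congr' ?_
  filter_upwards [hx.eventually_ge_atTop 1] with n hn
  have : (⌊x n⌋₊ : ℝ) ≠ 0 := by exact_mod_cast (Nat.floor_pos.2 hn).ne'
  field_simp

variable {α : ℝ}

lemma monotone_toNat_floor_pow_two_pow (hα : 1 ≤ α) :
    Monotone fun n => (⌊α ^ (2 ^ (n + 1))⌋).toNat :=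
  monotone_nat_of_le_succ fun n => Int.toNat_le_toNat <| Int.floor_le_floor <|
    pow_le_pow_right₀ hα (Nat.pow_le_pow_right two_pos (by omega))

lemma toNat_floor_pow_two_pow_pos (hα : 1 ≤ α) (n : ℕ) : 0 < (⌊α ^ (2 ^ (n + 1))⌋).toNat := by
  rw [Int.floor_toNat, Nat.floor_pos]
  exact one_le_pow₀ hα

end FloorPowers

lemma exists_rat_tsum_of_not_isType2IrrationalitySequence {a : ℕ → ℕ} (hmono : Monotone a)
    (hpos : ∀ n, 0 < a n) (h : ¬ IsType2IrrationalitySequence a) :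
    ∃ b : ℕ → ℕ, (∀ n, 0 < b n) ∧ Tendsto (fun n => (b n : ℝ) / a n) atTop (𝓝 1) ∧
      ∃ r : ℚ, ∑' n, 1 / (b n : ℝ) = r := by
  simp only [IsType2IrrationalitySequence, hmono, hpos, implies_true, true_and, not_forall,
    Irrational, Set.mem_range, not_not] at h
  obtain ⟨b, hb, hba, r, hr⟩ := h
  exact ⟨b, hb, hba, r, hr.symm⟩

def HasRigidData (α : ℝ) (N : ℕ) (Q₀ A₀ : ℤ) : Prop :=
  ∃ b : ℕ → ℕ, ∃ Q A : ℕ → ℤ, IsRigidFrom b Q A N ∧ Q N = Q₀ ∧ A N = A₀ ∧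
    Tendsto (fun n => (b n : ℝ) / α ^ 2 ^ (n + 1)) atTop (𝓝 1)

lemma subsingleton_setOf_hasRigidData (N : ℕ) (Q₀ A₀ : ℤ) :
    {α : ℝ | 0 < α ∧ HasRigidData α N Q₀ A₀}.Subsingleton := by
  rintro α ⟨hα, b, Q, A, hrig, hQ, hA, hbα⟩ β ⟨hβ, b', Q', A', hrig', hQ', hA', hbβ⟩
  have hbb' := hrig.eq hrig' (hQ.trans hQ'.symm) (hA.trans hA'.symm)
  refine eq_of_tendsto_div_pow_two_pow hα hβ hbα (hbβ.congr' ?_)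
  filter_upwards [eventually_ge_atTop N] with n hn
  rw [hbb' n hn]

lemma exists_hasRigidData {α : ℝ} (hα : 1 < α)
    (h : ¬ IsType2IrrationalitySequence fun n => (⌊α ^ (2 ^ (n + 1))⌋).toNat) :
    ∃ N Q₀ A₀, HasRigidData α N Q₀ A₀ := by
  obtain ⟨b, hb, hba, r, hr⟩ := exists_rat_tsum_of_not_isType2IrrationalitySequence
    (monotone_toNat_floor_pow_two_pow hα.le) (toNat_floor_pow_two_pow_pos hα.le) h
  have hbα : Tendsto (fun n => (b n : ℝ) / α ^ 2 ^ (n + 1)) atTop (𝓝 1) :=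
    tendsto_div_of_tendsto_div_natFloor
      ((tendsto_pow_atTop_atTop_of_one_lt hα).comp tendsto_two_pow_succ_atTop)
      (by simpa only [Int.floor_toNat] using hba)
  have hbR : ∀ n, (0 : ℝ) < b n := fun n => by exact_mod_cast hb n
  have hrat : (r.num : ℝ) = (r.den : ℤ) * ∑' n, 1 / (b n : ℝ) := by
    rw [hr]; exact_mod_cast (Rat.den_mul_eq_num r).symm
  obtain ⟨N, hN⟩ := exists_isRigidFrom_tailNum hb (by exact_mod_cast r.pos) hrat
    (tendsto_sq_div_succ_of_tendsto_div_pow_two_pow (by linarith) hbα)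
    (tendsto_div_succ_of_tendsto_div_pow_two_pow hα hbR hbα)
  exact ⟨N, _, _, b, _, _, hN, rfl, rfl, hbα⟩

theorem type2_complement_countable :
    Set.Countable {α : ℝ | 1 < α ∧
      ¬ IsType2IrrationalitySequence (fun n => (⌊α ^ (2 ^ (n + 1))⌋).toNat)} := by
  refine (Set.countable_iUnion fun d : ℕ × ℤ × ℤ =>
    (subsingleton_setOf_hasRigidData d.1 d.2.1 d.2.2).countable).mono ?_
  rintro α ⟨hα, hbad⟩
  obtain ⟨N, Q₀, A₀, h⟩ := exists_hasRigidData hα hbad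
  exact Set.mem_iUnion.2 ⟨(N, Q₀, A₀), by linarith, h⟩
end

section
/- For any positive real number r, the pseudo-greedy expansion (a_n) of r, defined recursively by a_n = ⌊(r − ∑_{k=1}^{n−1} 1/a_k)^{−1} + 1⌉, satisfies r = ∑_{n=1}^∞ 1/a_n. -/
/-!
Write `x n = r - ∑_{k<n} 1/a_k` for the remainder, so that `a_n = round (x_n⁻¹ + 1)` and
`x_{n+1} = x_n - 1/a_n`. Rounding puts `a_n` between `x_n⁻¹ + 1/2` and `x_n⁻¹ + 3/2`: the lower
bound keeps every remainder positive, the upper one makes it shrink at least by the factor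
`3r / (2 + 3r) < 1`. So the remainders tend to `0` geometrically and the partial sums tend to `r`.
-/

open Filter Finset Topology

section RoundInvAddOne

variable {α : Type*} [Field α] [LinearOrder α] [IsStrictOrderedRing α] [FloorRing α] {y r : α}

lemma inv_add_half_lt_round_inv_add_one (y : α) : y⁻¹ + 1 / 2 < round (y⁻¹ + 1) := by
  linarith [sub_half_lt_round (y⁻¹ + 1)]

lemma round_inv_add_one_pos (hy : 0 < y) : (0 : α) < round (y⁻¹ + 1) := by
  linarith [inv_add_half_lt_round_inv_add_one y, inv_pos.mpr hy]

lemma one_div_round_inv_add_one_lt (hy : 0 < y) : 1 / (round (y⁻¹ + 1) : α) < y := by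
  calc 1 / (round (y⁻¹ + 1) : α) < 1 / y⁻¹ :=
        one_div_lt_one_div_of_lt (by positivity) (by linarith [inv_add_half_lt_round_inv_add_one y])
    _ = y := by rw [one_div, inv_inv]

lemma div_le_one_div_round_inv_add_one (hy : 0 < y) :
    y / (1 + 3 / 2 * y) ≤ 1 / (round (y⁻¹ + 1) : α) := by
  have hround : (round (y⁻¹ + 1) : α) ≤ y⁻¹ + 3 / 2 := by
    linarith [round_le_add_half (y⁻¹ + 1)]
  rw [div_le_div_iff₀ (by positivity) (round_inv_add_one_pos hy)]
  calc y * round (y⁻¹ + 1) ≤ y * (y⁻¹ + 3 / 2) := by gcongr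
    _ = 1 * (1 + 3 / 2 * y) := by field_simp

lemma sub_one_div_round_inv_add_one_pos (hy : 0 < y) : 0 < y - 1 / (round (y⁻¹ + 1) : α) :=
  sub_pos.mpr (one_div_round_inv_add_one_lt hy)

lemma sub_one_div_round_inv_add_one_le_mul (hy : 0 < y) (hyr : y ≤ r) :
    y - 1 / (round (y⁻¹ + 1) : α) ≤ 3 * r / (2 + 3 * r) * y := by
  have hr : 0 < r := hy.trans_le hyr
  calc y - 1 / (round (y⁻¹ + 1) : α) ≤ y - y / (1 + 3 / 2 * y) :=
        sub_le_sub_left (div_le_one_div_round_inv_add_one hy) y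
    _ ≤ y - y / (1 + 3 / 2 * r) := by gcongr
    _ = 3 * r / (2 + 3 * r) * y := by field_simp; ring

end RoundInvAddOne

lemma pseudoGreedy_remainder_bounds {x : ℕ → ℝ} (h0 : 0 < x 0)
    (hsucc : ∀ n, x (n + 1) = x n - 1 / (round ((x n)⁻¹ + 1) : ℝ)) (n : ℕ) :
    0 < x n ∧ x n ≤ (3 * x 0 / (2 + 3 * x 0)) ^ n * x 0 := by
  have hq : 0 ≤ 3 * x 0 / (2 + 3 * x 0) := by positivity
  have hq1 : 3 * x 0 / (2 + 3 * x 0) ≤ 1 := by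
    rw [div_le_one (by positivity)]; linarith
  induction n with
  | zero => simpa using h0
  | succ n ih =>
    obtain ⟨hpos, hle⟩ := ih
    have hxr : x n ≤ x 0 := hle.trans (mul_le_of_le_one_left h0.le (pow_le_one₀ hq hq1))
    rw [hsucc n]
    refine ⟨sub_one_div_round_inv_add_one_pos hpos,
      (sub_one_div_round_inv_add_one_le_mul hpos hxr).trans ?_⟩
    rw [pow_succ', mul_assoc]
    gcongr

theorem pseudo_greedy_expansion_sums
    (r : ℝ) (hr : 0 < r) (a : ℕ → ℤ)
    (ha : ∀ n, a n = round ((r - ∑ k ∈ Finset.range n, 1 / (a k : ℝ))⁻¹ + 1)) :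
    r = ∑' n, 1 / (a n : ℝ) := by
  set x : ℕ → ℝ := fun n => r - ∑ k ∈ range n, 1 / (a k : ℝ) with hx
  have hx0 : x 0 = r := by simp [hx]
  have hsucc : ∀ n, x (n + 1) = x n - 1 / (round ((x n)⁻¹ + 1) : ℝ) := fun n => by
    simp only [hx, sum_range_succ, ← ha n]; ring
  have hbounds := pseudoGreedy_remainder_bounds (hx0 ▸ hr) hsucc
  have hq : 3 * r / (2 + 3 * r) < 1 := by rw [div_lt_one (by positivity)]; linarith
  have hx_tendsto : Tendsto x atTop (𝓝 0) := by
    refine squeeze_zero (fun n => (hbounds n).1.le) (fun n => (hbounds n).2) ?_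
    simpa [hx0] using (tendsto_pow_atTop_nhds_zero_of_lt_one (by positivity) hq).mul_const r
  have hnonneg : ∀ n, 0 ≤ 1 / (a n : ℝ) := fun n => by
    rw [ha n]
    exact one_div_nonneg.mpr (round_inv_add_one_pos (hbounds n).1).le
  have hpartial : Tendsto (fun n => ∑ k ∈ range n, 1 / (a k : ℝ)) atTop (𝓝 r) := by
    simpa [hx] using tendsto_const_nhds (x := r).sub hx_tendsto
  exact ((hasSum_iff_tendsto_nat_of_nonneg hnonneg r).mpr hpartial).tsum_eq.symm
end

section
/- Let r > 0 with pseudo-greedy expansion (a_n), remainder sequence x_n = r − ∑_{k<n} 1/a_k, and gap sequence ε_n = x_n^{−1} + 1 − a_n. Then a_{n+1} = a_n²/(1 − ε_n) − a_n + (1 − ε_{n+1}) for all n. -/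
/-! Rounding gives `ε_n < 1/2`, hence `a_n > x_n⁻¹ + 1/2`. Whenever `x⁻¹ = a - 1 + ε`, the next
remainder is `x - a⁻¹ = x (1 - ε) / a`, so the remainders stay positive, and inverting gives
`x_{n+1}⁻¹ = a_n² / (1 - ε_n) - a_n`; the definition of `ε_{n+1}` turns this into the recurrence. -/

open Filter Finset

section Field

variable {K : Type*} [Field K] {x a ε : K}

theorem sub_inv_eq_mul_one_sub_div (hx : x ≠ 0) (ha : a ≠ 0) (h : x⁻¹ = a - 1 + ε) :
    x - a⁻¹ = x * (1 - ε) / a := by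
  have hε : ε = x⁻¹ - a + 1 := by rw [h]; ring
  rw [hε]
  field_simp
  ring

theorem inv_sub_inv_eq_sq_div_sub (hx : x ≠ 0) (ha : a ≠ 0) (hε : ε ≠ 1)
    (h : x⁻¹ = a - 1 + ε) : (x - a⁻¹)⁻¹ = a ^ 2 / (1 - ε) - a := by
  have hε' : 1 - ε ≠ 0 := sub_ne_zero.mpr hε.symm
  have hx1 : x * (a - 1 + ε) = 1 := by rw [← h, mul_inv_cancel₀ hx]
  rw [sub_inv_eq_mul_one_sub_div hx ha h]
  field_simp
  linear_combination -hx1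

theorem sub_inv_pos_of_inv_eq [LinearOrder K] [IsStrictOrderedRing K] (hx : 0 < x) (ha : 0 < a) (hε : ε < 1)
    (h : x⁻¹ = a - 1 + ε) : 0 < x - a⁻¹ := by
  rw [sub_inv_eq_mul_one_sub_div hx.ne' ha.ne' h]
  exact div_pos (mul_pos hx (by linarith)) ha

end Field

theorem pseudo_greedy_recurrence
    (r : ℝ) (hr : 0 < r) (a : ℕ → ℤ) (x ε : ℕ → ℝ)
    (hx : ∀ n, x n = r - ∑ k ∈ Finset.range n, 1 / (a k : ℝ))
    (ha : ∀ n, a n = round ((x n)⁻¹ + 1))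
    (hε : ∀ n, ε n = (x n)⁻¹ + 1 - (a n : ℝ)) :
    ∀ n, (a (n + 1) : ℝ) = (a n : ℝ) ^ 2 / (1 - ε n) - (a n : ℝ) + (1 - ε (n + 1)) := by
  have hε_lt : ∀ n, ε n < 1 / 2 := fun n => by
    have := sub_half_lt_round ((x n)⁻¹ + 1)
    rw [← ha n] at this
    linarith [hε n]
  have hinv : ∀ n, (x n)⁻¹ = a n - 1 + ε n := fun n => by linarith [hε n]
  have hstep : ∀ n, x (n + 1) = x n - (a n : ℝ)⁻¹ := fun n => by
    rw [hx, hx, sum_range_succ, one_div]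
    ring
  have ha_pos : ∀ n, 0 < x n → (0 : ℝ) < a n := fun n hxn => by
    linarith [hε_lt n, hinv n, inv_pos.mpr hxn]
  have hx_pos : ∀ n, 0 < x n := by
    intro n
    induction n with
    | zero => simpa [hx 0] using hr
    | succ n ih =>
      rw [hstep]
      exact sub_inv_pos_of_inv_eq ih (ha_pos n ih) (by linarith [hε_lt n]) (hinv n)
  intro n
  have hrec := inv_sub_inv_eq_sq_div_sub (hx_pos n).ne' (ha_pos n (hx_pos n)).ne'
    (by linarith [hε_lt n]) (hinv n)
  rw [← hstep] at hrec
  linarith [hinv (n + 1)]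
end

section
/- Let r > 0 and (ε_n) be the gap sequence of its pseudo-greedy expansion. If ε_n = 0 for some n, then ε_{n+1} = 0. -/
/-! Once `ε_n = 0`, the reciprocal `1/x_n = a_n - 1` is an integer, and then
`x_{n+1} = 1/(a_n - 1) - 1/a_n = 1/(a_n (a_n - 1))` has an integer reciprocal as well,
so `1/x_{n+1} + 1` is its own rounding. -/

open Filter Finset

/-- For `a ∈ {0, 1}` the reciprocal is integral only because of the convention `0⁻¹ = 0`. -/
lemma exists_intCast_eq_inv_sub_inv (a : ℤ) :
    ∃ m : ℤ, (((a : ℝ) - 1)⁻¹ - 1 / a)⁻¹ = m := by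
  rcases eq_or_ne a 0 with rfl | ha₀
  · exact ⟨-1, by norm_num⟩
  rcases eq_or_ne a 1 with rfl | ha₁
  · exact ⟨-1, by norm_num⟩
  refine ⟨a * (a - 1), ?_⟩
  have : (a : ℝ) - 1 ≠ 0 := sub_ne_zero.mpr (mod_cast ha₁)
  field_simp
  push_cast
  ring

theorem gap_zero_propagates_general
    (r : ℝ) (a : ℕ → ℤ) (x ε : ℕ → ℝ)
    (hx : ∀ n, x n = r - ∑ k ∈ Finset.range n, 1 / (a k : ℝ))
    (ha : ∀ n, a n = round ((x n)⁻¹ + 1))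
    (hε : ∀ n, ε n = (x n)⁻¹ + 1 - (a n : ℝ))
    (n : ℕ) (hzero : ε n = 0) :
    ε (n + 1) = 0 := by
  have hx_succ : x (n + 1) = x n - 1 / a n := by
    rw [hx, hx, sum_range_succ]
    ring
  have hx_n : x n = ((a n : ℝ) - 1)⁻¹ :=
    inv_eq_iff_eq_inv.mp (by linarith [hε n])
  obtain ⟨m, hm⟩ := exists_intCast_eq_inv_sub_inv (a n)
  have hinv : (x (n + 1))⁻¹ = m := by rw [hx_succ, hx_n, hm]
  rw [hε, ha, hinv]
  simp [round_add_one]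

theorem gap_zero_propagates
    (r : ℝ) (hr : 0 < r) (a : ℕ → ℤ) (x ε : ℕ → ℝ)
    (hx : ∀ n, x n = r - ∑ k ∈ Finset.range n, 1 / (a k : ℝ))
    (ha : ∀ n, a n = round ((x n)⁻¹ + 1))
    (hε : ∀ n, ε n = (x n)⁻¹ + 1 - (a n : ℝ))
    (n : ℕ) (hzero : ε n = 0) :
    ε (n + 1) = 0 :=
  gap_zero_propagates_general r a x ε hx ha hε n hzero
end

section
/- For any positive integer m, the pseudo-greedy expansion of 1/m is given by a_n = s_n(m), where s_1(m) = m + 1 and s_{n+1}(m) = s_n(m)² − s_n(m) + 1; moreover the remainder sequence satisfies x_n = 1/(s_n(m) − 1) and the gap sequence is identically zero. -/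
/-!
Each step of the expansion is the identity `1/(t-1) - 1/t = 1/(t(t-1)) = 1/(s' - 1)` with
`s' = t² - t + 1`: if the remainder is `1/(s n - 1)`, then `x⁻¹ + 1` is exactly the integer `s n`,
so it is its own rounding (the gap vanishes) and subtracting `1/s n` leaves `1/(s (n+1) - 1)`.
-/

open Finset

lemma Nat.le_sq_sub_add_one (k : ℕ) : k ≤ k ^ 2 - k + 1 := by
  rcases k with _ | k
  · simp
  · have : (k + 1) ^ 2 - (k + 1) = k * (k + 1) := by
      rw [sq, ← Nat.sub_one_mul]; rfl
    rw [this]; nlinarith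

lemma Nat.cast_sq_sub_add_one {R : Type*} [CommRing R] (k : ℕ) :
    ((k ^ 2 - k + 1 : ℕ) : R) = (k : R) ^ 2 - k + 1 := by
  rw [Nat.cast_add, Nat.cast_sub (Nat.le_self_pow two_ne_zero k)]
  push_cast; ring

lemma inv_one_div_sub_one_add_one {K : Type*} [DivisionRing K] (t : K) :
    (1 / (t - 1))⁻¹ + 1 = t := by
  rw [one_div, inv_inv, sub_add_cancel]

lemma one_div_sub_one_sub_one_div {K : Type*} [Field K] {t : K}
    (ht : t ≠ 0) (ht1 : t - 1 ≠ 0) :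
    1 / (t - 1) - 1 / t = 1 / ((t ^ 2 - t + 1) - 1) := by
  rw [show t ^ 2 - t + 1 - 1 = t * (t - 1) by ring]
  field_simp
  ring

theorem pseudo_greedy_of_unit_fraction
    (m : ℕ) (hm : 0 < m)
    (s : ℕ → ℕ) (hs0 : s 0 = m + 1) (hsrec : ∀ n, s (n + 1) = (s n) ^ 2 - s n + 1)
    (a : ℕ → ℤ) (x ε : ℕ → ℝ)
    (hx : ∀ n, x n = 1 / (m : ℝ) - ∑ k ∈ Finset.range n, 1 / (a k : ℝ))
    (ha : ∀ n, a n = round ((x n)⁻¹ + 1))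
    (hε : ∀ n, ε n = (x n)⁻¹ + 1 - (a n : ℝ)) :
    (∀ n, a n = (s n : ℤ)) ∧ (∀ n, x n = 1 / ((s n : ℝ) - 1)) ∧ (∀ n, ε n = 0) := by
  have hs_mono : Monotone s :=
    monotone_nat_of_le_succ fun n => hsrec n ▸ Nat.le_sq_sub_add_one (s n)
  have hs_two (n : ℕ) : (2 : ℝ) ≤ s n := by
    exact_mod_cast (show 2 ≤ s 0 by omega).trans (hs_mono n.zero_le)
  have ha_of_x {n : ℕ} (hxn : x n = 1 / ((s n : ℝ) - 1)) : a n = s n := by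
    rw [ha, hxn, inv_one_div_sub_one_add_one, ← Int.cast_natCast, round_intCast]
  have hxs (n : ℕ) : x n = 1 / ((s n : ℝ) - 1) := by
    induction n with
    | zero => simp [hx, hs0]
    | succ n ih =>
      have hstep : x (n + 1) = x n - 1 / (a n : ℝ) := by
        rw [hx, hx, sum_range_succ]; ring
      rw [hstep, ih, ha_of_x ih, Int.cast_natCast, hsrec, Nat.cast_sq_sub_add_one,
        one_div_sub_one_sub_one_div] <;> linarith [hs_two n]
  refine ⟨fun n => ha_of_x (hxs n), hxs, fun n => ?_⟩
  rw [hε, hxs, inv_one_div_sub_one_add_one, ha_of_x (hxs n), Int.cast_natCast, sub_self]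
end

section
/- Let r > 0 be rational with gap sequence (ε_n) of its pseudo-greedy expansion. If ε_n ≥ 0 for all sufficiently large n, then ε_n = 0 for all sufficiently large n. -/
/-!
The iterates `x_n` of the pseudo-greedy step stay positive. A vanishing gap means `x_n = 1/m`
for an integer `m`; then `x_{n+1} = 1/(m(m+1))` and the gap vanishes from there on.
For rational `x_n` write `x_n⁻¹ = m/c` and `ε_n = e/c`: then `x_{n+1}⁻¹ = m a_n/(c - e)`, so while
the gaps are positive the denominators of `x_n⁻¹` strictly decrease, which cannot go on forever.
-/

open Filter Finset

section Field

variable {K : Type*} [Field K] [LinearOrder K] [IsStrictOrderedRing K] [FloorRing K]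

def pseudoGreedyDigit (x : K) : ℤ := round (x⁻¹ + 1)

def pseudoGreedyStep (x : K) : K := x - 1 / pseudoGreedyDigit x

def pseudoGreedyGap (x : K) : K := x⁻¹ + 1 - pseudoGreedyDigit x

theorem pseudoGreedyGap_lt_half (x : K) : pseudoGreedyGap x < 1 / 2 := by
  have := sub_half_lt_round (x⁻¹ + 1)
  rw [pseudoGreedyGap, pseudoGreedyDigit]
  linarith

theorem inv_lt_pseudoGreedyDigit (x : K) : x⁻¹ < pseudoGreedyDigit x := by
  have := pseudoGreedyGap_lt_half x
  rw [pseudoGreedyGap] at this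
  linarith

theorem pseudoGreedyStep_pos {x : K} (hx : 0 < x) : 0 < pseudoGreedyStep x := by
  have hinv : 0 < x⁻¹ := inv_pos.mpr hx
  have hlt : 1 / (pseudoGreedyDigit x : K) < x := by
    simpa only [one_div, inv_inv] using inv_strictAnti₀ hinv (inv_lt_pseudoGreedyDigit x)
  rw [pseudoGreedyStep]
  linarith

theorem pseudoGreedyStep_iterate_pos {x : K} (hx : 0 < x) (n : ℕ) :
    0 < pseudoGreedyStep^[n] x := by
  induction n with
  | zero => exact hx
  | succ n ih => rw [Function.iterate_succ_apply']; exact pseudoGreedyStep_pos ih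

theorem pseudoGreedyGap_eq_zero_iff {x : K} :
    pseudoGreedyGap x = 0 ↔ ∃ m : ℤ, x⁻¹ = m := by
  constructor
  · intro h
    exact ⟨pseudoGreedyDigit x - 1, by rw [pseudoGreedyGap] at h; push_cast; linarith⟩
  · rintro ⟨m, hm⟩
    rw [pseudoGreedyGap, pseudoGreedyDigit, hm, ← Int.cast_one, ← Int.cast_add, round_intCast]
    push_cast
    ring

theorem pseudoGreedyGap_step_eq_zero {x : K} (hx : 0 < x) (h : pseudoGreedyGap x = 0) :
    pseudoGreedyGap (pseudoGreedyStep x) = 0 := by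
  obtain ⟨m, hm⟩ := pseudoGreedyGap_eq_zero_iff.mp h
  have hmpos : (0 : K) < m := hm ▸ inv_pos.mpr hx
  have hdigit : (pseudoGreedyDigit x : K) = m + 1 := by
    rw [pseudoGreedyGap] at h; linarith
  refine pseudoGreedyGap_eq_zero_iff.mpr ⟨m * (m + 1), ?_⟩
  rw [pseudoGreedyStep, hdigit, ← inv_inv x, hm]
  push_cast
  field_simp
  ring

theorem Rat.pseudoGreedyDigit_cast (q : ℚ) : pseudoGreedyDigit (q : K) = pseudoGreedyDigit q := by
  rw [pseudoGreedyDigit, pseudoGreedyDigit, ← Rat.round_cast (α := K)]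
  push_cast
  rfl

theorem Rat.cast_pseudoGreedyStep (q : ℚ) :
    ((pseudoGreedyStep q : ℚ) : K) = pseudoGreedyStep (q : K) := by
  rw [pseudoGreedyStep, pseudoGreedyStep, Rat.pseudoGreedyDigit_cast]
  push_cast
  rfl

theorem Rat.cast_pseudoGreedyGap (q : ℚ) :
    ((pseudoGreedyGap q : ℚ) : K) = pseudoGreedyGap (q : K) := by
  rw [pseudoGreedyGap, pseudoGreedyGap, Rat.pseudoGreedyDigit_cast]
  push_cast
  rfl

end Field

theorem den_inv_pseudoGreedyStep_lt {x : ℚ} (hx : 0 < x) (hgap : 0 < pseudoGreedyGap x) :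
    (pseudoGreedyStep x)⁻¹.den < x⁻¹.den := by
  set t := x⁻¹ with ht
  set a := pseudoGreedyDigit x
  have hc : (0 : ℚ) < t.den := by exact_mod_cast t.den_pos
  have hnum : t * t.den = t.num := Rat.mul_den_eq_num t
  set e : ℤ := t.num + t.den - t.den * a
  set c' : ℤ := t.den - e
  have hc' : (c' : ℚ) = t.den * (a - t) := by
    simp only [c', e]; push_cast; linear_combination hnum
  have hgap' : pseudoGreedyGap x = t + 1 - a := rfl
  have hhalf := pseudoGreedyGap_lt_half x
  have hc'pos : 0 < c' := by
    have : (0 : ℚ) < c' := by rw [hc']; apply mul_pos hc; linarith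
    exact_mod_cast this
  have hc'lt : c' < t.den := by
    have : (c' : ℚ) < t.den := by rw [hc']; nlinarith
    exact_mod_cast this
  have hinv_step : (pseudoGreedyStep x)⁻¹ = (t.num * a : ℤ) / (c' : ℤ) := by
    have ht0 : t ≠ 0 := by positivity
    have hat : (a : ℚ) - t ≠ 0 := by linarith
    have ha0 : (a : ℚ) ≠ 0 := by linarith [inv_lt_pseudoGreedyDigit x, inv_pos.mpr hx]
    have hstep : pseudoGreedyStep x = t⁻¹ - 1 / a := by rw [ht, inv_inv]; rfl
    rw [hc', hstep]
    push_cast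
    rw [← hnum]
    field_simp
  have hdvd := Rat.den_dvd (t.num * a) c'
  rw [Rat.divInt_eq_div, ← hinv_step] at hdvd
  have := Int.le_of_dvd hc'pos hdvd
  omega

theorem exists_pseudoGreedyGap_iterate_eq_zero {x : ℚ} (hx : 0 < x) {N : ℕ}
    (hN : ∀ n ≥ N, 0 ≤ pseudoGreedyGap (pseudoGreedyStep^[n] x)) :
    ∃ n, pseudoGreedyGap (pseudoGreedyStep^[n] x) = 0 := by
  by_contra! hne
  refine not_strictAnti_of_wellFoundedLT (fun k ↦ (pseudoGreedyStep^[N + k] x)⁻¹.den)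
    (strictAnti_nat_of_succ_lt fun k ↦ ?_)
  have hgap : 0 < pseudoGreedyGap (pseudoGreedyStep^[N + k] x) :=
    (hN _ (by omega)).lt_of_ne (hne _).symm
  simpa only [← add_assoc, Function.iterate_succ_apply'] using
    den_inv_pseudoGreedyStep_lt (pseudoGreedyStep_iterate_pos hx _) hgap

theorem pseudoGreedyGap_iterate_eventually_eq_zero {x : ℚ} (hx : 0 < x) {N : ℕ}
    (hN : ∀ n ≥ N, 0 ≤ pseudoGreedyGap (pseudoGreedyStep^[n] x)) :
    ∃ M, ∀ n ≥ M, pseudoGreedyGap (pseudoGreedyStep^[n] x) = 0 := by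
  obtain ⟨M, hM⟩ := exists_pseudoGreedyGap_iterate_eq_zero hx hN
  refine ⟨M, fun n hn ↦ ?_⟩
  induction n, hn using Nat.le_induction with
  | base => exact hM
  | succ n _ ih =>
    rw [Function.iterate_succ_apply']
    exact pseudoGreedyGap_step_eq_zero (pseudoGreedyStep_iterate_pos hx n) ih

theorem gap_eventually_zero_of_eventually_nonneg
    (r : ℚ) (hr : 0 < r) (a : ℕ → ℤ) (x ε : ℕ → ℝ)
    (hx : ∀ n, x n = (r : ℝ) - ∑ k ∈ Finset.range n, 1 / (a k : ℝ))
    (ha : ∀ n, a n = round ((x n)⁻¹ + 1))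
    (hε : ∀ n, ε n = (x n)⁻¹ + 1 - (a n : ℝ))
    (hnonneg : ∃ N, ∀ n ≥ N, 0 ≤ ε n) :
    ∃ N, ∀ n ≥ N, ε n = 0 := by
  have hdigit : ∀ n, a n = pseudoGreedyDigit (x n) := ha
  have hxr : ∀ n, x n = ((pseudoGreedyStep^[n] r : ℚ) : ℝ) := by
    intro n
    induction n with
    | zero => simp [hx]
    | succ n ih =>
      rw [Function.iterate_succ_apply', Rat.cast_pseudoGreedyStep, ← ih, pseudoGreedyStep,
        ← hdigit, hx, hx, Finset.sum_range_succ, sub_add_eq_sub_sub]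
  have hεr : ∀ n, ε n = ((pseudoGreedyGap (pseudoGreedyStep^[n] r) : ℚ) : ℝ) := by
    intro n
    rw [Rat.cast_pseudoGreedyGap, ← hxr, hε, pseudoGreedyGap, ← hdigit]
  obtain ⟨N, hN⟩ := hnonneg
  obtain ⟨M, hM⟩ := pseudoGreedyGap_iterate_eventually_eq_zero hr (N := N)
    fun n hn ↦ by exact_mod_cast (hεr n ▸ hN n hn)
  exact ⟨M, fun n hn ↦ by rw [hεr, hM n hn, Rat.cast_zero]⟩
end
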